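/- arXiv:2408.03254 — 7 statements merged into one kernel-verified Lean document; each statement's English description precedes it below -/
import Mathlib

section
/- Let d be a positive integer and (φ₀,…,φ_d) ∈ ℝ^{d+1}. Then there exist complex polynomials P, Q with deg P ≤ d and deg Q ≤ d−1, P having parity d mod 2 and Q having parity (d−1) mod 2, such that for all a ∈ [−1,1], e^{iφ₀Z} ∏_{k=1}^{d} ( W_X(a) e^{iφ_kZ} ) = [[P(a), iQ(a)√(1−a²)],[i\overline{Q}(a)√(1−a²), \overline{P}(a)]], where \overline{P}, \overline{Q} denote the polynomials whose coefficients are the complex conjugates of those of P, Q; moreover |P(a)|² + (1−a²)|Q(a)|² = 1 for all a ∈ [−1,1]. -/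
open Matrix Polynomial

/-- `e^{iαZ}` for the Pauli-Z matrix. -/
noncomputable def eiZ (α : ℝ) : Matrix (Fin 2) (Fin 2) ℂ :=
  NormedSpace.exp ((Complex.I * α) • (!![1, 0; 0, -1] : Matrix (Fin 2) (Fin 2) ℂ))

/-- The signal unitary `W_X(a) = [[a, i√(1−a²)],[i√(1−a²), a]]` for `a ∈ [−1,1]`. -/
noncomputable def WX (a : ℝ) : Matrix (Fin 2) (Fin 2) ℂ :=
  !![(a : ℂ), Complex.I * Real.sqrt (1 - a ^ 2);
     Complex.I * Real.sqrt (1 - a ^ 2), (a : ℂ)]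

lemma eiZ_eq (α : ℝ) :
    eiZ α = !![Complex.exp (Complex.I * α), 0; 0, Complex.exp (-(Complex.I * α))] := by
  have h1 : ((Complex.I * α) • (!![1, 0; 0, -1] : Matrix (Fin 2) (Fin 2) ℂ))
      = Matrix.diagonal ![Complex.I * α, -(Complex.I * α)] := by
    ext i j; fin_cases i <;> fin_cases j <;> simp [Matrix.diagonal]
  rw [eiZ, h1, Matrix.exp_diagonal]
  ext i j; fin_cases i <;> fin_cases j <;>
    simp [Matrix.diagonal, ← Complex.exp_eq_exp_ℂ]

lemma conj_ee (t : ℝ) :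
    (starRingEnd ℂ) (Complex.exp (Complex.I * t)) = Complex.exp (-(Complex.I * t)) := by
  rw [← Complex.exp_conj]; congr 1; simp [Complex.conj_I]

lemma conj_ee' (t : ℝ) :
    (starRingEnd ℂ) (Complex.exp (-(Complex.I * t))) = Complex.exp (Complex.I * t) := by
  rw [← Complex.exp_conj]; congr 1; simp [Complex.conj_I]

lemma ee_mul (t : ℝ) :
    Complex.exp (Complex.I * t) * Complex.exp (-(Complex.I * t)) = 1 := by
  rw [← Complex.exp_add]; simp

lemma conj_eval (p : Polynomial ℂ) (a : ℝ) :
    (p.map (starRingEnd ℂ)).eval (a : ℂ) = (starRingEnd ℂ) (p.eval (a : ℂ)) := by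
  have h : ((a : ℂ)) = (starRingEnd ℂ) (a : ℂ) := by simp
  conv_lhs => rw [Polynomial.eval_map, h]
  rw [Polynomial.eval₂_at_apply]

lemma map_map_conj (p : Polynomial ℂ) :
    (p.map (starRingEnd ℂ)).map (starRingEnd ℂ) = p := by
  rw [Polynomial.map_map]
  have : (starRingEnd ℂ).comp (starRingEnd ℂ) = RingHom.id ℂ := by
    ext z; simp
  rw [this, Polynomial.map_id]

lemma coeff_mul_X' (p : Polynomial ℂ) (i : ℕ) :
    (p * X).coeff i = if 1 ≤ i then p.coeff (i - 1) else 0 := by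
  simpa using Polynomial.coeff_mul_X_pow' p 1 i

lemma qsp_helper (θ : List ℝ) : ∃ P Q : Polynomial ℂ,
    (∀ i, θ.length < i → P.coeff i = 0) ∧
    (∀ i, θ.length ≤ i → Q.coeff i = 0) ∧
    (∀ i, i % 2 ≠ θ.length % 2 → P.coeff i = 0) ∧
    (∀ i, i % 2 ≠ (θ.length + 1) % 2 → Q.coeff i = 0) ∧
    (∀ a : ℝ, a ∈ Set.Icc (-1 : ℝ) 1 →
      (θ.map (fun t => WX a * eiZ t)).prod =
        !![P.eval (a : ℂ), Complex.I * Q.eval (a : ℂ) * Real.sqrt (1 - a ^ 2);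
           Complex.I * (Q.map (starRingEnd ℂ)).eval (a : ℂ) * Real.sqrt (1 - a ^ 2),
           (P.map (starRingEnd ℂ)).eval (a : ℂ)]) ∧
    (∀ a : ℝ, a ∈ Set.Icc (-1 : ℝ) 1 →
      P.eval (a : ℂ) * (P.map (starRingEnd ℂ)).eval (a : ℂ)
        + (1 - (a : ℂ) ^ 2) * (Q.eval (a : ℂ) * (Q.map (starRingEnd ℂ)).eval (a : ℂ)) = 1) := by
  induction θ with
  | nil =>
    refine ⟨1, 0, ?_, ?_, ?_, ?_, ?_, ?_⟩
    · intro i hi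
      simp only [List.length_nil] at hi
      rw [Polynomial.coeff_one, if_neg (by omega)]
    · intro i _; simp
    · intro i hi
      simp only [List.length_nil] at hi
      rw [Polynomial.coeff_one, if_neg (by omega)]
    · intro i _; simp
    · intro a _; simp [Matrix.one_fin_two]
    · intro a _; simp
  | cons t l ih =>
    obtain ⟨P, Q, hPd, hQd, hPp, hQp, hM, hN⟩ := ih
    set e := Complex.exp (Complex.I * t) with he_def
    set f := Complex.exp (-(Complex.I * t)) with hf_def
    set Pc := P.map (starRingEnd ℂ) with hPc_def
    set Qc := Q.map (starRingEnd ℂ) with hQc_def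
    have hce : (starRingEnd ℂ) e = f := conj_ee t
    have hcf : (starRingEnd ℂ) f = e := conj_ee' t
    have hef : e * f = 1 := ee_mul t
    have hPm : (C e * (P * X) - C f * (Qc - Qc * X ^ 2)).map (starRingEnd ℂ)
        = C f * (Pc * X) - C e * (Q - Q * X ^ 2) := by
      simp only [Polynomial.map_mul, Polynomial.map_sub, Polynomial.map_pow,
        Polynomial.map_C, Polynomial.map_X, hce, hcf, hQc_def, hPc_def, map_map_conj]
    have hQm : (C e * (Q * X) + C f * Pc).map (starRingEnd ℂ)
        = C f * (Qc * X) + C e * P := by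
      simp only [Polynomial.map_mul, Polynomial.map_add,
        Polynomial.map_C, Polynomial.map_X, hce, hcf, hQc_def, hPc_def, map_map_conj]
    refine ⟨C e * (P * X) - C f * (Qc - Qc * X ^ 2),
            C e * (Q * X) + C f * Pc, ?_, ?_, ?_, ?_, ?_, ?_⟩
    · intro i hi
      simp only [List.length_cons] at hi
      simp only [Polynomial.coeff_sub, Polynomial.coeff_C_mul, coeff_mul_X',
        Polynomial.coeff_mul_X_pow', hQc_def, Polynomial.coeff_map]
      rw [if_pos (show 1 ≤ i by omega), if_pos (show 2 ≤ i by omega),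
        hPd (i - 1) (by omega), hQd i (by omega), hQd (i - 2) (by omega)]
      simp
    · intro i hi
      simp only [List.length_cons] at hi
      simp only [Polynomial.coeff_add, Polynomial.coeff_C_mul, coeff_mul_X',
        hPc_def, Polynomial.coeff_map]
      rw [if_pos (show 1 ≤ i by omega), hQd (i - 1) (by omega), hPd i (by omega)]
      simp
    · intro i hi
      simp only [List.length_cons] at hi
      simp only [Polynomial.coeff_sub, Polynomial.coeff_C_mul, coeff_mul_X',
        Polynomial.coeff_mul_X_pow', hQc_def, Polynomial.coeff_map]
      rw [hQp i (by omega)]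
      split_ifs <;>
        first
          | (rw [hPp (i - 1) (by omega), hQp (i - 2) (by omega)]; simp)
          | (rw [hPp (i - 1) (by omega)]; simp)
          | (exfalso; omega)
          | simp
    · intro i hi
      simp only [List.length_cons] at hi
      simp only [Polynomial.coeff_add, Polynomial.coeff_C_mul, coeff_mul_X',
        hPc_def, Polynomial.coeff_map]
      rw [hPp i (by omega)]
      split_ifs <;>
        first
          | (rw [hQp (i - 1) (by omega)]; simp)
          | simp
    · intro a ha
      have hs0 : (0 : ℝ) ≤ 1 - a ^ 2 := by
        rcases ha with ⟨h1, h2⟩; nlinarith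
      have hs : ((Real.sqrt (1 - a ^ 2) : ℝ) : ℂ) ^ 2 = 1 - (a : ℂ) ^ 2 := by
        rw [← Complex.ofReal_pow, Real.sq_sqrt hs0]; push_cast; ring
      rw [List.map_cons, List.prod_cons, hM a ha, WX, eiZ_eq, ← he_def, ← hf_def,
        Matrix.mul_fin_two, Matrix.mul_fin_two, hPm, hQm]
      have hI : (Complex.I : ℂ) ^ 2 = -1 := Complex.I_sq
      ext i j
      fin_cases i <;> fin_cases j <;> simp
      all_goals first
        | ring1
        | linear_combination (Complex.I ^ 2 * f * Polynomial.eval (a : ℂ) Qc) * hs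
            + ((1 - (a : ℂ) ^ 2) * f * Polynomial.eval (a : ℂ) Qc) * hI
        | linear_combination (Complex.I ^ 2 * e * Polynomial.eval (a : ℂ) Q) * hs
            + ((1 - (a : ℂ) ^ 2) * e * Polynomial.eval (a : ℂ) Q) * hI
    · intro a ha
      have hN' := hN a ha
      rw [hPm, hQm]
      simp only [Polynomial.eval_mul, Polynomial.eval_add, Polynomial.eval_sub,
        Polynomial.eval_C, Polynomial.eval_X, Polynomial.eval_pow]
      linear_combination (e * f) * hN' + hef

/-- Any QSP sequence of length `d` has the canonical form in terms of polynomials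
`P, Q` with `deg P ≤ d`, `deg Q ≤ d − 1`, of parities `d mod 2` and `(d−1) mod 2`
respectively, satisfying `|P(a)|² + (1−a²)|Q(a)|² = 1` on `[−1,1]`. -/
theorem qsp_product_form (d : ℕ) (hd : 0 < d) (φ : Fin (d + 1) → ℝ) :
    ∃ P Q : Polynomial ℂ,
      P.natDegree ≤ d ∧ Q.natDegree ≤ d - 1 ∧
      (∀ i : ℕ, i % 2 ≠ d % 2 → P.coeff i = 0) ∧
      (∀ i : ℕ, i % 2 ≠ (d - 1) % 2 → Q.coeff i = 0) ∧
      (∀ a : ℝ, a ∈ Set.Icc (-1 : ℝ) 1 →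
        eiZ (φ 0) * ((List.finRange d).map (fun k => WX a * eiZ (φ k.succ))).prod =
          !![P.eval (a : ℂ), Complex.I * Q.eval (a : ℂ) * Real.sqrt (1 - a ^ 2);
             Complex.I * (Q.map (starRingEnd ℂ)).eval (a : ℂ) * Real.sqrt (1 - a ^ 2),
             (P.map (starRingEnd ℂ)).eval (a : ℂ)]) ∧
      (∀ a : ℝ, a ∈ Set.Icc (-1 : ℝ) 1 →
        ‖P.eval (a : ℂ)‖ ^ 2
          + (1 - a ^ 2) * ‖Q.eval (a : ℂ)‖ ^ 2 = 1) := by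
  obtain ⟨P, Q, hPd, hQd, hPp, hQp, hM, hN⟩ :=
    qsp_helper ((List.finRange d).map (fun k => φ k.succ))
  simp only [List.length_map, List.length_finRange] at hPd hQd hPp hQp hM hN
  set e := Complex.exp (Complex.I * (φ 0)) with he_def
  set f := Complex.exp (-(Complex.I * (φ 0))) with hf_def
  have hce : (starRingEnd ℂ) e = f := conj_ee (φ 0)
  have hef : e * f = 1 := ee_mul (φ 0)
  refine ⟨C e * P, C e * Q, ?_, ?_, ?_, ?_, ?_, ?_⟩
  · exact le_trans (Polynomial.natDegree_C_mul_le _ _)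
      (Polynomial.natDegree_le_iff_coeff_eq_zero.mpr fun N h => hPd N h)
  · exact le_trans (Polynomial.natDegree_C_mul_le _ _)
      (Polynomial.natDegree_le_iff_coeff_eq_zero.mpr fun N h => hQd N (by omega))
  · intro i hi; rw [Polynomial.coeff_C_mul, hPp i hi, mul_zero]
  · intro i hi; rw [Polynomial.coeff_C_mul, hQp i (by omega), mul_zero]
  · intro a ha
    have hPm : (C e * P).map (starRingEnd ℂ) = C f * (P.map (starRingEnd ℂ)) := by
      simp only [Polynomial.map_mul, Polynomial.map_C, hce]
    have hQm : (C e * Q).map (starRingEnd ℂ) = C f * (Q.map (starRingEnd ℂ)) := by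
      simp only [Polynomial.map_mul, Polynomial.map_C, hce]
    have hlist : ((List.finRange d).map (fun k => WX a * eiZ (φ k.succ)))
        = ((List.finRange d).map (fun k => φ k.succ)).map (fun t => WX a * eiZ t) := by
      rw [List.map_map]; rfl
    rw [hlist, hM a ha, eiZ_eq, ← he_def, ← hf_def, Matrix.mul_fin_two, hPm, hQm]
    ext i j
    fin_cases i <;> fin_cases j <;> simp <;> ring
  · intro a ha
    have hN' := hN a ha
    rw [conj_eval, conj_eval, Complex.mul_conj, Complex.mul_conj] at hN'
    have habs : ‖e‖ = 1 := by
      simp [he_def, Complex.norm_exp]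
    simp only [Polynomial.eval_mul, Polynomial.eval_C, norm_mul, habs, one_mul]
    rw [Complex.sq_norm, Complex.sq_norm]
    exact_mod_cast hN'
end

section
/- (Generalized QSP Theorem) Let n, d be positive integers, let U be an n×n complex unitary matrix, and let P, Q be complex polynomials of degree at most d satisfying |P(z)|² + |Q(z)|² = 1 for every z ∈ ℂ with |z| = 1. Then there exist θ₀,…,θ_d ∈ ℝ, ω₀,…,ω_d ∈ ℝ, and λ ∈ ℝ such that the 2n×2n matrix ( ∏_{j=d}^{1} R(θ_j, ω_j, 0)·(|0⟩⟨0| ⊗ U + |1⟩⟨1| ⊗ I) )·R(θ₀, ω₀, λ), where R(θ, ω, λ) = [[e^{i(λ+ω)}cos θ, e^{iω}sin θ],[e^{iλ}sin θ, −cos θ]] ⊗ I_n, has top-left n×n block equal to P(U) and bottom-left n×n block equal to Q(U). -/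
open Matrix Polynomial Kronecker

/-- The GQSP rotation `R(θ, ω, λ) = [[e^{i(λ+ω)}cos θ, e^{iω}sin θ],[e^{iλ}sin θ, −cos θ]] ⊗ Iₙ`. -/
noncomputable def gqspR (n : ℕ) (θ ω lam : ℝ) : Matrix (Fin 2 × Fin n) (Fin 2 × Fin n) ℂ :=
  (!![Complex.exp (Complex.I * (lam + ω)) * Real.cos θ,
      Complex.exp (Complex.I * ω) * Real.sin θ;
      Complex.exp (Complex.I * lam) * Real.sin θ,
      -(Real.cos θ : ℂ)] : Matrix (Fin 2) (Fin 2) ℂ) ⊗ₖ (1 : Matrix (Fin n) (Fin n) ℂ)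

/-- The 0-controlled unitary `|0⟩⟨0| ⊗ U + |1⟩⟨1| ⊗ Iₙ`. -/
noncomputable def ctrlU (n : ℕ) (U : Matrix (Fin n) (Fin n) ℂ) :
    Matrix (Fin 2 × Fin n) (Fin 2 × Fin n) ℂ :=
  (!![1, 0; 0, 0] : Matrix (Fin 2) (Fin 2) ℂ) ⊗ₖ U
    + (!![0, 0; 0, 1] : Matrix (Fin 2) (Fin 2) ℂ) ⊗ₖ (1 : Matrix (Fin n) (Fin n) ℂ)

section ListLemma
variable {M : Type*} [Monoid M]

def natProd (F : ℕ → M) : ℕ → M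
  | 0 => 1
  | m+1 => F (m+1) * natProd F m

lemma revProd_eq (F : ℕ → M) : ∀ m : ℕ,
    ((List.finRange m).reverse.map (fun k : Fin m => F (k.val+1))).prod = natProd F m
  | 0 => by simp [natProd]
  | m+1 => by
    have h : List.finRange (m+1)
        = ((List.finRange m).map Fin.castSucc).concat (Fin.last m) := by
      rw [← List.ofFn_id, List.ofFn_succ', ← List.ofFn_id, List.map_ofFn]
      rfl
    rw [h, List.concat_eq_append, List.reverse_append, List.reverse_singleton,
      List.singleton_append, List.map_cons, List.prod_cons, ← List.map_reverse,
      List.map_map]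
    have : ((fun k : Fin (m+1) => F (k.val+1)) ∘ Fin.castSucc)
        = (fun k : Fin m => F (k.val+1)) := by ext k; simp
    rw [this, revProd_eq F m]
    rfl
end ListLemma
lemma sin_arccos_div (x y : ℝ) (hx : 0 ≤ x) (hy : 0 ≤ y) (hr : Real.sqrt (x^2 + y^2) ≠ 0) :
    Real.sin (Real.arccos (x / Real.sqrt (x^2 + y^2))) = y / Real.sqrt (x^2 + y^2) := by
  have h0 : 0 ≤ x^2 + y^2 := by positivity
  have hr2 : (Real.sqrt (x^2+y^2))^2 = x^2 + y^2 := Real.sq_sqrt h0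
  have hrpos : 0 < Real.sqrt (x^2+y^2) := lt_of_le_of_ne (Real.sqrt_nonneg _) (Ne.symm hr)
  have hne : x^2+y^2 ≠ 0 := fun h => hr (by rw [h]; simp)
  rw [Real.sin_arccos, div_pow, hr2]
  have h1 : 1 - x^2/(x^2+y^2) = y^2/(x^2+y^2) := by field_simp; ring
  rw [h1, Real.sqrt_div (by positivity) , Real.sqrt_sq hy]

lemma cos_arccos_div (x y : ℝ) (hx : 0 ≤ x) (hy : 0 ≤ y) (hr : Real.sqrt (x^2 + y^2) ≠ 0) :
    Real.cos (Real.arccos (x / Real.sqrt (x^2 + y^2))) = x / Real.sqrt (x^2 + y^2) := by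
  have h0 : 0 ≤ x^2 + y^2 := by positivity
  have hr2 : (Real.sqrt (x^2+y^2))^2 = x^2 + y^2 := Real.sq_sqrt h0
  have hrpos : 0 < Real.sqrt (x^2+y^2) := lt_of_le_of_ne (Real.sqrt_nonneg _) (Ne.symm hr)
  apply Real.cos_arccos
  · have : (0:ℝ) ≤ x / Real.sqrt (x^2+y^2) := by positivity
    linarith
  · rw [div_le_one hrpos]
    have : x = Real.sqrt (x^2) := (Real.sqrt_sq hx).symm
    rw [this]
    exact Real.sqrt_le_sqrt (by nlinarith)

lemma phase_choice (p0 q0 pd qd : ℂ)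
    (H : pd * (starRingEnd ℂ) p0 + qd * (starRingEnd ℂ) q0 = 0) :
    ∃ θ ω : ℝ,
      (Real.cos θ : ℂ) * p0 + Complex.exp (Complex.I * ω) * Real.sin θ * q0 = 0 ∧
      (Real.sin θ : ℂ) * pd - Complex.exp (Complex.I * ω) * Real.cos θ * qd = 0 := by
  by_cases hzero : pd = 0 ∧ qd = 0
  · -- top coefficients vanish
    obtain ⟨hpd, hqd⟩ := hzero
    by_cases h0 : p0 = 0 ∧ q0 = 0
    · exact ⟨0, 0, by simp [h0.1, h0.2], by simp [hpd, hqd]⟩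
    · set r : ℝ := Real.sqrt (‖q0‖ ^2 + ‖p0‖ ^2) with hr_def
      have hrne : r ≠ 0 := by
        rw [hr_def]
        intro h
        rw [Real.sqrt_eq_zero (by positivity)] at h
        have h1 : ‖q0‖ = 0 := by nlinarith [norm_nonneg p0, norm_nonneg q0]
        have h2 : ‖p0‖ = 0 := by nlinarith [norm_nonneg p0, norm_nonneg q0]
        exact h0 ⟨by simpa using h2, by simpa using h1⟩
      refine ⟨Real.arccos (‖q0‖ / r), Complex.arg p0 - Complex.arg q0 + Real.pi,
        ?_, by simp [hpd, hqd]⟩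
      rw [cos_arccos_div _ _ (norm_nonneg _) (norm_nonneg _) hrne,
        sin_arccos_div _ _ (norm_nonneg _) (norm_nonneg _) hrne]
      have hp : (‖p0‖ : ℂ) * Complex.exp (Complex.arg p0 * Complex.I) = p0 :=
        Complex.norm_mul_exp_arg_mul_I p0
      have hq : (‖q0‖ : ℂ) * Complex.exp (Complex.arg q0 * Complex.I) = q0 :=
        Complex.norm_mul_exp_arg_mul_I q0
      have hw : Complex.exp (Complex.I * (Complex.arg p0 - Complex.arg q0 + Real.pi))
          * Complex.exp (Complex.arg q0 * Complex.I)
          = - Complex.exp (Complex.arg p0 * Complex.I) := by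
        rw [← Complex.exp_add]
        have h2 : Complex.I * (↑(Complex.arg p0) - ↑(Complex.arg q0) + ↑Real.pi)
            + ↑(Complex.arg q0) * Complex.I
            = ↑(Complex.arg p0) * Complex.I + ↑Real.pi * Complex.I := by push_cast; ring
        rw [h2, Complex.exp_add, Complex.exp_pi_mul_I]
        ring
      have hrC : (r : ℂ) ≠ 0 := by exact_mod_cast hrne
      push_cast
      linear_combination (-(↑(‖q0‖) : ℂ)/↑r) * hp
        + (-(Complex.exp (Complex.I * (↑(Complex.arg p0) - ↑(Complex.arg q0) + ↑Real.pi)))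
            * ↑(‖p0‖)/↑r) * hq
        + ((↑(‖p0‖) : ℂ) * ↑(‖q0‖)/↑r) * hw
  · -- top coefficients not both zero
    set r : ℝ := Real.sqrt (‖pd‖ ^2 + ‖qd‖ ^2) with hr_def
    have hrne : r ≠ 0 := by
      rw [hr_def]
      intro h
      rw [Real.sqrt_eq_zero (by positivity)] at h
      have h1 : ‖pd‖ = 0 := by nlinarith [norm_nonneg pd, norm_nonneg qd]
      have h2 : ‖qd‖ = 0 := by nlinarith [norm_nonneg pd, norm_nonneg qd]
      exact hzero ⟨by simpa using h1, by simpa using h2⟩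
    have hrC : (r : ℂ) ≠ 0 := by exact_mod_cast hrne
    have hp : (‖pd‖ : ℂ) * Complex.exp (Complex.arg pd * Complex.I) = pd :=
      Complex.norm_mul_exp_arg_mul_I pd
    have hq : (‖qd‖ : ℂ) * Complex.exp (Complex.arg qd * Complex.I) = qd :=
      Complex.norm_mul_exp_arg_mul_I qd
    have hw2 : Complex.exp (Complex.I * (Complex.arg pd - Complex.arg qd))
        * Complex.exp (Complex.arg qd * Complex.I)
        = Complex.exp (Complex.arg pd * Complex.I) := by
      rw [← Complex.exp_add]
      congr 1
      push_cast
      ring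
    have hcEp : (starRingEnd ℂ) (Complex.exp (↑(Complex.arg pd) * Complex.I))
        * Complex.exp (↑(Complex.arg pd) * Complex.I) = 1 := by
      rw [← Complex.exp_conj, ← Complex.exp_add]; simp
    have hcEq : (starRingEnd ℂ) (Complex.exp (↑(Complex.arg qd) * Complex.I))
        * Complex.exp (↑(Complex.arg qd) * Complex.I) = 1 := by
      rw [← Complex.exp_conj, ← Complex.exp_add]; simp
    have ha : (‖pd‖ : ℂ)
        = (starRingEnd ℂ) pd * Complex.exp (↑(Complex.arg pd) * Complex.I) := by
      have := congrArg (starRingEnd ℂ) hp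
      simp only [_root_.map_mul, Complex.conj_ofReal] at this
      calc (‖pd‖ : ℂ) = (‖pd‖ : ℂ) * 1 := by ring
        _ = _ := by rw [← hcEp]; rw [← this]; ring
    have hb : (‖qd‖ : ℂ)
        = (starRingEnd ℂ) qd * Complex.exp (↑(Complex.arg qd) * Complex.I) := by
      have := congrArg (starRingEnd ℂ) hq
      simp only [_root_.map_mul, Complex.conj_ofReal] at this
      calc (‖qd‖ : ℂ) = (‖qd‖ : ℂ) * 1 := by ring
        _ = _ := by rw [← hcEq]; rw [← this]; ring
    have Hc : (starRingEnd ℂ) pd * p0 + (starRingEnd ℂ) qd * q0 = 0 := by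
      have := congrArg (starRingEnd ℂ) H
      simpa [mul_comm] using this
    refine ⟨Real.arccos (‖pd‖ / r), Complex.arg pd - Complex.arg qd, ?_, ?_⟩
    · rw [cos_arccos_div _ _ (norm_nonneg _) (norm_nonneg _) hrne,
        sin_arccos_div _ _ (norm_nonneg _) (norm_nonneg _) hrne]
      push_cast
      linear_combination (p0/(r:ℂ)) * ha
        + (Complex.exp (Complex.I * (↑(Complex.arg pd) - ↑(Complex.arg qd))) * q0/(r:ℂ)) * hb
        + ((starRingEnd ℂ) qd * q0/(r:ℂ)) * hw2
        + (Complex.exp (↑(Complex.arg pd) * Complex.I)/(r:ℂ)) * Hc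
    · rw [cos_arccos_div _ _ (norm_nonneg _) (norm_nonneg _) hrne,
        sin_arccos_div _ _ (norm_nonneg _) (norm_nonneg _) hrne]
      push_cast
      linear_combination (-(‖qd‖ : ℂ)/(r:ℂ)) * hp
        + (Complex.exp (Complex.I * (↑(Complex.arg pd) - ↑(Complex.arg qd)))
            * (‖pd‖ : ℂ)/(r:ℂ)) * hq
        + (-(‖pd‖ : ℂ) * (‖qd‖ : ℂ)/(r:ℂ)) * hw2
lemma circle_infinite : {z : ℂ | ‖z‖ = 1}.Infinite := by
  apply Set.infinite_of_injOn_mapsTo (f := fun t : ℝ => Complex.exp (t * Complex.I))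
    (s := Set.Icc (0:ℝ) 1)
  · intro a ha b hb hab
    simp only at hab
    rw [Complex.exp_eq_exp_iff_exists_int] at hab
    obtain ⟨m, hm⟩ := hab
    have h1 : ((a : ℂ) - b - m * (2 * Real.pi)) * Complex.I = 0 := by
      push_cast at hm ⊢
      linear_combination hm
    have h2 : ((a : ℂ) - b - m * (2 * Real.pi)) = 0 := by
      simpa [Complex.I_ne_zero] using h1
    have h3 : a - b - m * (2 * Real.pi) = 0 := by exact_mod_cast h2
    have hpi := Real.pi_gt_three
    have hm0 : m = 0 := by
      rcases lt_trichotomy m 0 with h | h | h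
      · have hm1 : m ≤ -1 := by omega
        have : (m : ℝ) ≤ -1 := by exact_mod_cast hm1
        nlinarith [ha.1, ha.2, hb.1, hb.2]
      · exact h
      · have : (1 : ℝ) ≤ m := by exact_mod_cast h
        nlinarith [ha.1, ha.2, hb.1, hb.2]
    rw [hm0] at h3
    push_cast at h3
    linarith
  · intro a _
    simp [Complex.norm_exp]
  · exact Set.Icc_infinite (by norm_num)

lemma eval_aux (d : ℕ) (P : Polynomial ℂ) (hP : P.natDegree ≤ d+1) (z : ℂ)
    (hz : z * (starRingEnd ℂ) z = 1) (hz0 : z ≠ 0) :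
    Polynomial.eval z (∑ i ∈ Finset.range (d+2), ∑ j ∈ Finset.range (d+2),
        C (P.coeff i * (starRingEnd ℂ) (P.coeff j)) * X^(d+1+i-j))
      = z^(d+1) * P.eval z * (starRingEnd ℂ) (P.eval z) := by
  have hev : P.eval z = ∑ i ∈ Finset.range (d+2), P.coeff i * z ^ i :=
    Polynomial.eval_eq_sum_range' (by omega) z
  have hevc : (starRingEnd ℂ) (P.eval z)
      = ∑ j ∈ Finset.range (d+2), (starRingEnd ℂ) (P.coeff j) * ((starRingEnd ℂ) z) ^ j := by
    rw [hev, _root_.map_sum]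
    refine Finset.sum_congr rfl fun j _ => by simp [_root_.map_pow]
  rw [hevc, hev, mul_assoc, Finset.sum_mul_sum, Finset.mul_sum]
  simp only [Polynomial.eval_finset_sum, Polynomial.eval_mul, Polynomial.eval_C,
    Polynomial.eval_pow, Polynomial.eval_X]
  refine Finset.sum_congr rfl fun i hi => ?_
  rw [Finset.mul_sum]
  refine Finset.sum_congr rfl fun j hj => ?_
  simp only [Finset.mem_range] at hi hj
  have hle : j ≤ d+1+i := by omega
  have key : z^(d+1+i-j) = z^(d+1) * z^i * ((starRingEnd ℂ) z)^j := by
    have h1 : z^(d+1+i-j) * z^j = z^(d+1+i) := pow_sub_mul_pow z hle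
    have h2 : z^j * ((starRingEnd ℂ) z)^j = 1 := by
      rw [← mul_pow, hz, one_pow]
    calc z^(d+1+i-j) = z^(d+1+i-j) * (z^j * ((starRingEnd ℂ) z)^j) := by rw [h2, mul_one]
      _ = z^(d+1+i) * ((starRingEnd ℂ) z)^j := by rw [← mul_assoc, h1]
      _ = z^(d+1) * z^i * ((starRingEnd ℂ) z)^j := by rw [pow_add]
  rw [key]
  ring

lemma coeff_orth (d : ℕ) (P Q : Polynomial ℂ) (hP : P.natDegree ≤ d+1) (hQ : Q.natDegree ≤ d+1)
    (hPQ : ∀ z : ℂ, ‖z‖ = 1 →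
      ‖P.eval z‖ ^ 2 + ‖Q.eval z‖ ^ 2 = 1) :
    P.coeff (d+1) * (starRingEnd ℂ) (P.coeff 0) + Q.coeff (d+1) * (starRingEnd ℂ) (Q.coeff 0)
      = 0 := by
  set GP : Polynomial ℂ := ∑ i ∈ Finset.range (d+2), ∑ j ∈ Finset.range (d+2),
      C (P.coeff i * (starRingEnd ℂ) (P.coeff j)) * X^(d+1+i-j) with hGP
  set GQ : Polynomial ℂ := ∑ i ∈ Finset.range (d+2), ∑ j ∈ Finset.range (d+2),
      C (Q.coeff i * (starRingEnd ℂ) (Q.coeff j)) * X^(d+1+i-j) with hGQ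
  have hzero : GP + GQ - X^(d+1) = 0 := by
    apply Polynomial.eq_zero_of_infinite_isRoot
    apply circle_infinite.mono
    intro z hz
    simp only [Set.mem_setOf_eq] at hz ⊢
    have hz0 : z ≠ 0 := by
      intro h; rw [h] at hz; simp at hz
    have hzc : z * (starRingEnd ℂ) z = 1 := by
      rw [Complex.mul_conj]
      norm_cast
      rw [Complex.normSq_eq_norm_sq, hz, one_pow]
    have hPc : P.eval z * (starRingEnd ℂ) (P.eval z) = (‖P.eval z‖ ^ 2 : ℝ) := by
      rw [Complex.mul_conj, Complex.normSq_eq_norm_sq]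
    have hQc : Q.eval z * (starRingEnd ℂ) (Q.eval z) = (‖Q.eval z‖ ^ 2 : ℝ) := by
      rw [Complex.mul_conj, Complex.normSq_eq_norm_sq]
    show Polynomial.IsRoot _ z
    unfold Polynomial.IsRoot
    rw [Polynomial.eval_sub, Polynomial.eval_add, eval_aux d P hP z hzc hz0,
      eval_aux d Q hQ z hzc hz0, Polynomial.eval_pow, Polynomial.eval_X]
    have := hPQ z hz
    rw [mul_assoc, mul_assoc, hPc, hQc, ← mul_add]
    rw [show ((‖P.eval z‖ ^ 2 : ℝ) : ℂ) + ((‖Q.eval z‖ ^ 2 : ℝ) : ℂ)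
        = ((‖P.eval z‖ ^ 2 + ‖Q.eval z‖ ^ 2 : ℝ) : ℂ) by push_cast; ring,
      this]
    simp
  have hcoeff := congrArg (fun p => Polynomial.coeff p (2*d+2)) hzero
  simp only [Polynomial.coeff_sub, Polynomial.coeff_add, Polynomial.coeff_zero] at hcoeff
  have hXc : (X^(d+1) : Polynomial ℂ).coeff (2*d+2) = 0 := by
    rw [Polynomial.coeff_X_pow]
    simp only [ite_eq_right_iff]
    omega
  have hsum : ∀ (R : Polynomial ℂ), (∑ i ∈ Finset.range (d+2), ∑ j ∈ Finset.range (d+2),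
      C (R.coeff i * (starRingEnd ℂ) (R.coeff j)) * X^(d+1+i-j)).coeff (2*d+2)
      = R.coeff (d+1) * (starRingEnd ℂ) (R.coeff 0) := by
    intro R
    rw [Polynomial.finset_sum_coeff]
    rw [Finset.sum_eq_single (d+1)]
    · rw [Polynomial.finset_sum_coeff, Finset.sum_eq_single 0]
      · rw [Polynomial.coeff_C_mul, Polynomial.coeff_X_pow, if_pos (by omega), mul_one]
      · intro j hj hj0
        rw [Polynomial.coeff_C_mul, Polynomial.coeff_X_pow, if_neg (by
          simp only [Finset.mem_range] at hj; omega), mul_zero]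
      · intro h; exact absurd (Finset.mem_range.mpr (by omega)) h
    · intro i hi hid
      rw [Polynomial.finset_sum_coeff]
      apply Finset.sum_eq_zero
      intro j hj
      simp only [Finset.mem_range] at hi hj
      rw [Polynomial.coeff_C_mul, Polynomial.coeff_X_pow, if_neg (by omega), mul_zero]
    · intro h; exact absurd (Finset.mem_range.mpr (by omega)) h
  rw [hsum P, hsum Q, hXc, sub_zero] at hcoeff
  exact hcoeff

noncomputable def rP (θ ω lam : ℝ) : Matrix (Fin 2) (Fin 2) (Polynomial ℂ) :=
  !![Polynomial.C (Complex.exp (Complex.I * (lam + ω)) * Real.cos θ),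
     Polynomial.C (Complex.exp (Complex.I * ω) * Real.sin θ);
     Polynomial.C (Complex.exp (Complex.I * lam) * Real.sin θ),
     -Polynomial.C ((Real.cos θ : ℂ))]

noncomputable def cuP : Matrix (Fin 2) (Fin 2) (Polynomial ℂ) := !![Polynomial.X, 0; 0, 1]

noncomputable def prodP (θ ω : ℕ → ℝ) (lam : ℝ) : ℕ → Matrix (Fin 2) (Fin 2) (Polynomial ℂ)
  | 0 => rP (θ 0) (ω 0) lam
  | d+1 => rP (θ (d+1)) (ω (d+1)) 0 * cuP * prodP θ ω lam d

lemma prodP_congr (θ θ' ω ω' : ℕ → ℝ) (lam : ℝ) :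
    ∀ d : ℕ, (∀ k ≤ d, θ k = θ' k ∧ ω k = ω' k) →
      prodP θ ω lam d = prodP θ' ω' lam d
  | 0, h => by rw [prodP, prodP, (h 0 le_rfl).1, (h 0 le_rfl).2]
  | d+1, h => by
    rw [prodP, prodP, (h (d+1) le_rfl).1, (h (d+1) le_rfl).2,
      prodP_congr θ θ' ω ω' lam d (fun k hk => h k (le_trans hk (Nat.le_succ d)))]

lemma key : ∀ (d : ℕ) (P Q : Polynomial ℂ), P.natDegree ≤ d → Q.natDegree ≤ d →
    (∀ z : ℂ, ‖z‖ = 1 →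
      ‖P.eval z‖ ^ 2 + ‖Q.eval z‖ ^ 2 = 1) →
    ∃ (θ ω : ℕ → ℝ) (lam : ℝ),
      (prodP θ ω lam d) 0 0 = P ∧ (prodP θ ω lam d) 1 0 = Q := by
  intro d
  induction d with
  | zero =>
    intro P Q hP hQ hPQ
    have hPc := Polynomial.eq_C_of_natDegree_le_zero hP
    have hQc := Polynomial.eq_C_of_natDegree_le_zero hQ
    set p := P.coeff 0
    set q := Q.coeff 0
    have h1 : ‖p‖ ^ 2 + ‖q‖ ^ 2 = 1 := by
      have := hPQ 1 (by simp)
      rwa [hPc, hQc, Polynomial.eval_C, Polynomial.eval_C] at this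
    have hap : ‖p‖ ≤ 1 := by nlinarith [norm_nonneg p, norm_nonneg q]
    set θ0 := Real.arccos (‖p‖) with hθ0
    have hcos : Real.cos θ0 = ‖p‖ :=
      Real.cos_arccos (by linarith [norm_nonneg p]) hap
    have hsin : Real.sin θ0 = ‖q‖ := by
      rw [hθ0, Real.sin_arccos,
        show 1 - ‖p‖ ^ 2 = ‖q‖ ^ 2 by linarith,
        Real.sqrt_sq (norm_nonneg q)]
    refine ⟨fun _ => θ0, fun _ => Complex.arg p - Complex.arg q, Complex.arg q, ?_, ?_⟩
    · rw [prodP]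
      show Polynomial.C (Complex.exp (Complex.I * (↑(Complex.arg q)
        + ↑(Complex.arg p - Complex.arg q))) * ↑(Real.cos θ0)) = P
      rw [hcos, hPc]
      congr 1
      rw [show (↑(Complex.arg q) + ↑(Complex.arg p - Complex.arg q) : ℂ)
          = ↑(Complex.arg p) by push_cast; ring,
        mul_comm Complex.I, mul_comm]
      exact Complex.norm_mul_exp_arg_mul_I p
    · rw [prodP]
      show Polynomial.C (Complex.exp (Complex.I * ↑(Complex.arg q)) * ↑(Real.sin θ0)) = Q
      rw [hsin, hQc]
      congr 1
      rw [mul_comm Complex.I, mul_comm]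
      exact Complex.norm_mul_exp_arg_mul_I q
  | succ d ih =>
    intro P Q hP hQ hPQ
    have H := coeff_orth d P Q hP hQ hPQ
    obtain ⟨θn, ωn, hc1, hc2⟩ := phase_choice (P.coeff 0) (Q.coeff 0)
      (P.coeff (d+1)) (Q.coeff (d+1)) H
    set c : ℂ := (Real.cos θn : ℂ) with hc_def
    set s : ℂ := (Real.sin θn : ℂ) with hs_def
    set e : ℂ := Complex.exp (Complex.I * ωn) with he_def
    set em : ℂ := Complex.exp (-(Complex.I * ωn)) with hem_def
    have he : e * em = 1 := by rw [he_def, hem_def, ← Complex.exp_add]; simp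
    have hcs : c ^ 2 + s ^ 2 = 1 := by
      rw [hc_def, hs_def]
      exact_mod_cast Real.cos_sq_add_sin_sq θn
    set A1 : Polynomial ℂ := Polynomial.C (em * c) * P + Polynomial.C s * Q with hA1_def
    set Q' : Polynomial ℂ := Polynomial.C (em * s) * P - Polynomial.C c * Q with hQ'_def
    have hA1_0 : A1.coeff 0 = 0 := by
      rw [hA1_def]
      simp only [Polynomial.coeff_add, Polynomial.coeff_C_mul]
      linear_combination em * hc1 - s * Q.coeff 0 * he
    have hQ'_top : Q'.coeff (d+1) = 0 := by
      rw [hQ'_def]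
      simp only [Polynomial.coeff_sub, Polynomial.coeff_C_mul]
      linear_combination em * hc2 + c * Q.coeff (d+1) * he
    set P' : Polynomial ℂ := A1.divX with hP'_def
    have hXP' : Polynomial.X * P' = A1 := by
      have := Polynomial.X_mul_divX_add A1
      rwa [hA1_0, _root_.map_zero, add_zero] at this
    have hA1deg : A1.natDegree ≤ d + 1 := by
      refine le_trans (Polynomial.natDegree_add_le _ _) (max_le ?_ ?_)
      · exact le_trans (Polynomial.natDegree_C_mul_le _ _) hP
      · exact le_trans (Polynomial.natDegree_C_mul_le _ _) hQ
    have hP'deg : P'.natDegree ≤ d := by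
      refine Polynomial.natDegree_le_iff_coeff_eq_zero.mpr fun k hk => ?_
      rw [hP'_def, Polynomial.coeff_divX]
      exact Polynomial.coeff_eq_zero_of_natDegree_lt (lt_of_le_of_lt hA1deg (by omega))
    have hQ'deg : Q'.natDegree ≤ d := by
      refine Polynomial.natDegree_le_iff_coeff_eq_zero.mpr fun k hk => ?_
      rcases eq_or_lt_of_le (Nat.succ_le_of_lt hk) with hkd | hkd
      · exact hkd ▸ hQ'_top
      · have h1 : P.coeff k = 0 := Polynomial.coeff_eq_zero_of_natDegree_lt (by omega)
        have h2 : Q.coeff k = 0 := Polynomial.coeff_eq_zero_of_natDegree_lt (by omega)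
        rw [hQ'_def]
        simp [Polynomial.coeff_sub, mul_assoc, Polynomial.coeff_C_mul, h1, h2]
    have hcirc : ∀ z : ℂ, ‖z‖ = 1 →
        ‖P'.eval z‖ ^ 2 + ‖Q'.eval z‖ ^ 2 = 1 := by
      intro z hz
      have habs : ‖P'.eval z‖ = ‖A1.eval z‖ := by
        rw [← hXP', Polynomial.eval_mul, Polynomial.eval_X, norm_mul, hz, one_mul]
      rw [habs]
      have hkey : (A1.eval z) * (starRingEnd ℂ) (A1.eval z)
          + (Q'.eval z) * (starRingEnd ℂ) (Q'.eval z)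
          = (P.eval z) * (starRingEnd ℂ) (P.eval z)
            + (Q.eval z) * (starRingEnd ℂ) (Q.eval z) := by
        rw [hA1_def, hQ'_def]
        simp only [Polynomial.eval_add, Polynomial.eval_sub, Polynomial.eval_mul,
          Polynomial.eval_C, _root_.map_add, _root_.map_sub, _root_.map_mul]
        have hconj_c : (starRingEnd ℂ) c = c := by rw [hc_def]; exact Complex.conj_ofReal _
        have hconj_s : (starRingEnd ℂ) s = s := by rw [hs_def]; exact Complex.conj_ofReal _
        have hconj_em : (starRingEnd ℂ) em = e := by
          rw [hem_def, he_def, ← Complex.exp_conj]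
          congr 1
          simp [Complex.conj_ofReal]
        rw [hconj_c, hconj_s, hconj_em]
        linear_combination (P.eval z * (starRingEnd ℂ) (P.eval z)) * (c^2 + s^2) * he
          + (P.eval z * (starRingEnd ℂ) (P.eval z)
            + Q.eval z * (starRingEnd ℂ) (Q.eval z)) * hcs
      have hre : ∀ w : ℂ, w * (starRingEnd ℂ) w = (‖w‖ ^ 2 : ℝ) := fun w => by
        rw [Complex.mul_conj, Complex.normSq_eq_norm_sq]
      have := hPQ z hz
      have hC : ((‖A1.eval z‖ ^ 2 + ‖Q'.eval z‖ ^ 2 : ℝ) : ℂ)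
          = ((1 : ℝ) : ℂ) := by
        rw [Complex.ofReal_add, ← hre, ← hre, hkey, hre, hre, ← Complex.ofReal_add, this]
      have := Complex.ofReal_inj.mp hC
      linarith [this]
    obtain ⟨θ, ω, lam, h00, h10⟩ := ih P' Q' hP'deg hQ'deg hcirc
    have heP : Polynomial.C e * Polynomial.C em = 1 := by
      rw [← _root_.map_mul, he, _root_.map_one]
    have hcsP : Polynomial.C c * Polynomial.C c + Polynomial.C s * Polynomial.C s = 1 := by
      rw [← _root_.map_mul, ← _root_.map_mul, ← _root_.map_add, show c * c + s * s = 1 by linear_combination hcs,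
        _root_.map_one]
    have hcu0 : (cuP * prodP θ ω lam d) 0 0 = Polynomial.X * P' := by
      rw [Matrix.mul_apply, Fin.sum_univ_two, h00]
      simp [cuP]
    have hcu1 : (cuP * prodP θ ω lam d) 1 0 = Q' := by
      rw [Matrix.mul_apply, Fin.sum_univ_two, h10]
      simp [cuP]
    have e00 : rP θn ωn 0 0 0 = Polynomial.C e * Polynomial.C c := by
      show Polynomial.C (Complex.exp (Complex.I * (((0:ℝ):ℂ) + (ωn:ℂ))) * ((Real.cos θn : ℝ):ℂ)) = _
      rw [← _root_.map_mul, he_def, hc_def]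
      norm_num
    have e01 : rP θn ωn 0 0 1 = Polynomial.C e * Polynomial.C s := by
      show Polynomial.C (Complex.exp (Complex.I * (ωn:ℂ)) * ((Real.sin θn : ℝ):ℂ)) = _
      rw [← _root_.map_mul, he_def, hs_def]
    have e10 : rP θn ωn 0 1 0 = Polynomial.C s := by
      show Polynomial.C (Complex.exp (Complex.I * ((0:ℝ):ℂ)) * ((Real.sin θn : ℝ):ℂ)) = _
      rw [hs_def]
      norm_num
    have e11 : rP θn ωn 0 1 1 = -Polynomial.C c := by
      show -Polynomial.C ((Real.cos θn : ℝ):ℂ) = _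
      rw [hc_def]
    refine ⟨fun k => if k = d+1 then θn else θ k, fun k => if k = d+1 then ωn else ω k,
      lam, ?_, ?_⟩
    · rw [prodP, if_pos rfl, if_pos rfl,
        prodP_congr _ θ _ ω lam d (fun k hk => ⟨if_neg (by omega), if_neg (by omega)⟩),
        Matrix.mul_assoc, Matrix.mul_apply, Fin.sum_univ_two, hcu0, hcu1, hXP',
        hA1_def, hQ'_def, e00, e01]
      simp only [_root_.map_mul]
      linear_combination (Polynomial.C c * Polynomial.C c + Polynomial.C s * Polynomial.C s)
          * P * heP + P * hcsP
    · rw [prodP, if_pos rfl, if_pos rfl,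
        prodP_congr _ θ _ ω lam d (fun k hk => ⟨if_neg (by omega), if_neg (by omega)⟩),
        Matrix.mul_assoc, Matrix.mul_apply, Fin.sum_univ_two, hcu0, hcu1, hXP',
        hA1_def, hQ'_def, e10, e11]
      simp only [_root_.map_mul]
      linear_combination Q * hcsP

noncomputable def psi (n : ℕ) (U : Matrix (Fin n) (Fin n) ℂ) :
    Matrix (Fin 2) (Fin 2) (Polynomial ℂ) →+* Matrix (Fin 2 × Fin n) (Fin 2 × Fin n) ℂ :=
  (Matrix.compRingEquiv (Fin 2) (Fin n) ℂ).toRingHom.comp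
    ((Polynomial.aeval U).toRingHom.mapMatrix)

lemma psi_apply (n : ℕ) (U : Matrix (Fin n) (Fin n) ℂ)
    (M : Matrix (Fin 2) (Fin 2) (Polynomial ℂ)) (a b : Fin 2) (i j : Fin n) :
    psi n U M (a, i) (b, j) = (Polynomial.aeval U (M a b)) i j := rfl

lemma gqspR_eq (n : ℕ) (U : Matrix (Fin n) (Fin n) ℂ) (θ ω lam : ℝ) :
    gqspR n θ ω lam = psi n U (rP θ ω lam) := by
  ext ⟨a, i⟩ ⟨b, j⟩
  rw [psi_apply]
  fin_cases a <;> fin_cases b <;>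
    simp [gqspR, rP, Matrix.kroneckerMap_apply, Algebra.algebraMap_eq_smul_one,
      Matrix.smul_apply, Matrix.one_apply, mul_ite, mul_comm] <;>
    (try (split_ifs <;> simp))

lemma ctrlU_eq (n : ℕ) (U : Matrix (Fin n) (Fin n) ℂ) :
    ctrlU n U = psi n U cuP := by
  ext ⟨a, i⟩ ⟨b, j⟩
  rw [psi_apply]
  fin_cases a <;> fin_cases b <;>
    simp [ctrlU, cuP, Matrix.kroneckerMap_apply, Matrix.one_apply]

lemma natProd_psi (n : ℕ) (U : Matrix (Fin n) (Fin n) ℂ) (θ ω : ℕ → ℝ) (lam : ℝ) :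
    ∀ m : ℕ,
      natProd (fun k => gqspR n (θ k) (ω k) 0 * ctrlU n U) m * gqspR n (θ 0) (ω 0) lam
        = psi n U (prodP θ ω lam m)
  | 0 => by rw [natProd, prodP, one_mul, gqspR_eq n U]
  | m+1 => by
    rw [natProd, prodP, _root_.map_mul, _root_.map_mul, ← natProd_psi n U θ ω lam m,
      gqspR_eq n U, ctrlU_eq n U, Matrix.mul_assoc, Matrix.mul_assoc]


/-- Generalized QSP Theorem: for any unitary `U` and polynomials `P, Q` of degree at most `d`
with `|P(z)|² + |Q(z)|² = 1` on the unit circle, there are phases so that the GQSP sequence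
block-encodes `P(U)` in its top-left block and `Q(U)` in its bottom-left block. -/
theorem generalized_qsp (n d : ℕ) (hn : 0 < n) (hd : 0 < d)
    (U : Matrix (Fin n) (Fin n) ℂ) (hU : U ∈ Matrix.unitaryGroup (Fin n) ℂ)
    (P Q : Polynomial ℂ) (hP : P.natDegree ≤ d) (hQ : Q.natDegree ≤ d)
    (hPQ : ∀ z : ℂ, ‖z‖ = 1 →
      ‖P.eval z‖ ^ 2 + ‖Q.eval z‖ ^ 2 = 1) :
    ∃ (θ ω : Fin (d + 1) → ℝ) (lam : ℝ),
      ∀ i j : Fin n,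
        ((((List.finRange d).reverse.map
              (fun k => gqspR n (θ k.succ) (ω k.succ) 0 * ctrlU n U)).prod
            * gqspR n (θ 0) (ω 0) lam) ((0 : Fin 2), i) ((0 : Fin 2), j)
          = (Polynomial.aeval U P) i j) ∧
        ((((List.finRange d).reverse.map
              (fun k => gqspR n (θ k.succ) (ω k.succ) 0 * ctrlU n U)).prod
            * gqspR n (θ 0) (ω 0) lam) ((1 : Fin 2), i) ((0 : Fin 2), j)
          = (Polynomial.aeval U Q) i j) := by
  obtain ⟨θh, ωh, lam, h00, h10⟩ := key d P Q hP hQ hPQ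
  refine ⟨fun i => θh i.val, fun i => ωh i.val, lam, fun i j => ?_⟩
  have hlist : ((List.finRange d).reverse.map
        (fun k : Fin d => gqspR n (θh (k.val+1)) (ωh (k.val+1)) 0 * ctrlU n U)).prod
      = natProd (fun m => gqspR n (θh m) (ωh m) 0 * ctrlU n U) d :=
    revProd_eq (fun m => gqspR n (θh m) (ωh m) 0 * ctrlU n U) d
  have hfun : (fun k : Fin d => gqspR n (θh ((k.succ : Fin (d+1)).val)) (ωh ((k.succ : Fin (d+1)).val)) 0 * ctrlU n U)
      = (fun k : Fin d => gqspR n (θh (k.val+1)) (ωh (k.val+1)) 0 * ctrlU n U) := by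
    funext k
    rw [Fin.val_succ]
  have hzero : ((0 : Fin (d+1)) : ℕ) = 0 := rfl
  have hmain : ((List.finRange d).reverse.map
        (fun k : Fin d => gqspR n (θh ((k.succ : Fin (d+1)).val)) (ωh ((k.succ : Fin (d+1)).val)) 0 * ctrlU n U)).prod
      * gqspR n (θh ((0 : Fin (d+1)).val)) (ωh ((0 : Fin (d+1)).val)) lam
      = psi n U (prodP θh ωh lam d) := by
    rw [hfun, hlist, hzero, natProd_psi]
  constructor
  · have := congrFun (congrFun hmain ((0 : Fin 2), i)) ((0 : Fin 2), j)
    rw [this, psi_apply, h00]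
  · have := congrFun (congrFun hmain ((1 : Fin 2), i)) ((0 : Fin 2), j)
    rw [this, psi_apply, h10]
end

section
/- Let H be an n×n Hermitian complex matrix and set U = exp(iH). Define the controlled unitary cU = |0⟩⟨0| ⊗ I_n + |1⟩⟨1| ⊗ U (a 2n×2n matrix). Then −i·(⟨+| ⊗ I_n)·(cU)†·(ZX ⊗ I_n)·cU·(|+⟩ ⊗ I_n) = sin(H), where sin(H) := (exp(iH) − exp(−iH))/(2i). -/
open Matrix Kronecker

/-- The `2n×n` matrix `|+⟩ ⊗ Iₙ`. -/
noncomputable def ketPlusI (n : ℕ) : Matrix (Fin 2 × Fin n) (Fin n) ℂ :=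
  Matrix.of fun p j => (Real.sqrt 2 : ℂ)⁻¹ * (if p.2 = j then 1 else 0)

/-- The controlled unitary `cU = |0⟩⟨0| ⊗ Iₙ + |1⟩⟨1| ⊗ U`. -/
noncomputable def ctrl (n : ℕ) (U : Matrix (Fin n) (Fin n) ℂ) :
    Matrix (Fin 2 × Fin n) (Fin 2 × Fin n) ℂ :=
  (!![1, 0; 0, 0] : Matrix (Fin 2) (Fin 2) ℂ) ⊗ₖ (1 : Matrix (Fin n) (Fin n) ℂ)
    + (!![0, 0; 0, 1] : Matrix (Fin 2) (Fin 2) ℂ) ⊗ₖ U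

/-- `sin(H) := (exp(iH) − exp(−iH))/(2i)`. -/
noncomputable def matSin (n : ℕ) (H : Matrix (Fin n) (Fin n) ℂ) :
    Matrix (Fin n) (Fin n) ℂ :=
  (2 * Complex.I)⁻¹ • (NormedSpace.exp (Complex.I • H) - NormedSpace.exp (-(Complex.I • H)))

lemma kron_conjT {m n : ℕ} (A : Matrix (Fin m) (Fin m) ℂ) (B : Matrix (Fin n) (Fin n) ℂ) :
    (A ⊗ₖ B)ᴴ = Aᴴ ⊗ₖ Bᴴ := by
  ext p q
  simp [Matrix.conjTranspose_apply, Matrix.kroneckerMap_apply, star_mul']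

lemma sandwich {n : ℕ} (A : Matrix (Fin 2) (Fin 2) ℂ) (B : Matrix (Fin n) (Fin n) ℂ) :
    (ketPlusI n)ᴴ * (A ⊗ₖ B) * ketPlusI n
      = ((A 0 0 + A 0 1 + A 1 0 + A 1 1) / 2) • B := by
  have h2 : ((Real.sqrt 2 : ℂ))⁻¹ * ((Real.sqrt 2 : ℂ))⁻¹ = 1 / 2 := by
    rw [← mul_inv]; norm_cast
    rw [Real.mul_self_sqrt (by norm_num)]; norm_num
  have hs : star (((Real.sqrt 2 : ℝ) : ℂ))⁻¹ = (((Real.sqrt 2 : ℝ)) : ℂ)⁻¹ := by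
    simp [← Complex.ofReal_inv, Complex.conj_ofReal]
  ext i j
  simp only [Matrix.mul_apply, ketPlusI, Matrix.conjTranspose_apply, Matrix.of_apply,
    Matrix.kroneckerMap_apply, Fintype.sum_prod_type, Fin.sum_univ_two, star_mul', hs,
    apply_ite (star : ℂ → ℂ), star_one, star_zero, Matrix.smul_apply, smul_eq_mul,
    mul_ite, ite_mul, mul_one, one_mul, mul_zero, zero_mul, Finset.sum_ite_eq,
    Finset.sum_ite_eq', Finset.mem_univ, if_true, Finset.sum_mul, Finset.mul_sum]
  ring_nf
  rw [show ((Real.sqrt 2 : ℂ))⁻¹ ^ 2 = ((Real.sqrt 2 : ℂ))⁻¹ * ((Real.sqrt 2 : ℂ))⁻¹ from sq _,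
    h2]
  ring

lemma ctrl_conjT {n : ℕ} (U : Matrix (Fin n) (Fin n) ℂ) :
    (ctrl n U)ᴴ = ctrl n Uᴴ := by
  have h0 : (!![1, 0; 0, 0] : Matrix (Fin 2) (Fin 2) ℂ)ᴴ = !![1, 0; 0, 0] := by
    ext i j; fin_cases i <;> fin_cases j <;> simp [Matrix.conjTranspose_apply]
  have h1 : (!![0, 0; 0, 1] : Matrix (Fin 2) (Fin 2) ℂ)ᴴ = !![0, 0; 0, 1] := by
    ext i j; fin_cases i <;> fin_cases j <;> simp [Matrix.conjTranspose_apply]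
  simp [ctrl, Matrix.conjTranspose_add, kron_conjT, h0, h1, Matrix.conjTranspose_one]

/-- Block-encoding of `sin(H)`:
`−i·(⟨+| ⊗ Iₙ)·(cU)†·(ZX ⊗ Iₙ)·cU·(|+⟩ ⊗ Iₙ) = sin(H)` for `U = exp(iH)`, `H` Hermitian. -/
theorem block_encoding_sin (n : ℕ) (hn : 0 < n)
    (H : Matrix (Fin n) (Fin n) ℂ) (hH : H.IsHermitian) :
    (-Complex.I) •
      ((ketPlusI n)ᴴ * (ctrl n (NormedSpace.exp (Complex.I • H)))ᴴ *
        (((!![1, 0; 0, -1] : Matrix (Fin 2) (Fin 2) ℂ) *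
          (!![0, 1; 1, 0] : Matrix (Fin 2) (Fin 2) ℂ)) ⊗ₖ (1 : Matrix (Fin n) (Fin n) ℂ)) *
        ctrl n (NormedSpace.exp (Complex.I • H)) * ketPlusI n)
      = matSin n H := by
  set E := NormedSpace.exp (Complex.I • H) with hE
  set F := NormedSpace.exp (-(Complex.I • H)) with hF
  have hEH : Eᴴ = F := by
    rw [hE, hF, ← Matrix.exp_conjTranspose]
    congr 1
    rw [Matrix.conjTranspose_smul, hH.eq]
    simp [Complex.star_def, Complex.conj_I, neg_smul]
  have hZX : (!![1, 0; 0, -1] : Matrix (Fin 2) (Fin 2) ℂ) * !![0, 1; 1, 0]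
      = !![0, 1; -1, 0] := by
    ext i j; fin_cases i <;> fin_cases j <;> simp [Matrix.mul_apply, Fin.sum_univ_two]
  have hmid : (ctrl n E)ᴴ * ((!![0, 1; -1, 0] : Matrix (Fin 2) (Fin 2) ℂ)
        ⊗ₖ (1 : Matrix (Fin n) (Fin n) ℂ)) * ctrl n E
      = (!![0, 1; 0, 0] : Matrix (Fin 2) (Fin 2) ℂ) ⊗ₖ E
        + (!![0, 0; -1, 0] : Matrix (Fin 2) (Fin 2) ℂ) ⊗ₖ F := by
    rw [ctrl_conjT, hEH]
    simp only [ctrl, Matrix.add_mul, Matrix.mul_add, ← Matrix.mul_kronecker_mul,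
      Matrix.mul_one, Matrix.one_mul]
    have e1 : (!![1, 0; 0, 0] : Matrix (Fin 2) (Fin 2) ℂ) * !![0, 1; -1, 0] * !![1, 0; 0, 0]
        = 0 := by
      ext i j; fin_cases i <;> fin_cases j <;> simp [Matrix.mul_apply, Fin.sum_univ_two]
    have e2 : (!![1, 0; 0, 0] : Matrix (Fin 2) (Fin 2) ℂ) * !![0, 1; -1, 0] * !![0, 0; 0, 1]
        = !![0, 1; 0, 0] := by
      ext i j; fin_cases i <;> fin_cases j <;> simp [Matrix.mul_apply, Fin.sum_univ_two]
    have e3 : (!![0, 0; 0, 1] : Matrix (Fin 2) (Fin 2) ℂ) * !![0, 1; -1, 0] * !![1, 0; 0, 0]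
        = !![0, 0; -1, 0] := by
      ext i j; fin_cases i <;> fin_cases j <;> simp [Matrix.mul_apply, Fin.sum_univ_two]
    have e4 : (!![0, 0; 0, 1] : Matrix (Fin 2) (Fin 2) ℂ) * !![0, 1; -1, 0] * !![0, 0; 0, 1]
        = 0 := by
      ext i j; fin_cases i <;> fin_cases j <;> simp [Matrix.mul_apply, Fin.sum_univ_two]
    rw [e1, e2, e3, e4]
    simp [Matrix.zero_kronecker]
    abel
  rw [hZX]
  have hassoc : (ketPlusI n)ᴴ * (ctrl n E)ᴴ *
        ((!![0, 1; -1, 0] : Matrix (Fin 2) (Fin 2) ℂ) ⊗ₖ (1 : Matrix (Fin n) (Fin n) ℂ)) *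
        ctrl n E * ketPlusI n
      = (ketPlusI n)ᴴ * ((ctrl n E)ᴴ *
          ((!![0, 1; -1, 0] : Matrix (Fin 2) (Fin 2) ℂ) ⊗ₖ (1 : Matrix (Fin n) (Fin n) ℂ)) *
          ctrl n E) * ketPlusI n := by
    simp only [Matrix.mul_assoc]
  rw [hassoc, hmid, Matrix.mul_add, Matrix.add_mul, sandwich, sandwich]
  norm_num
  rw [matSin, ← hE, ← hF]
  rw [show (2 * Complex.I)⁻¹ = (-Complex.I / 2 : ℂ) by rw [mul_inv, Complex.inv_I]; ring]
  rw [smul_sub, smul_smul, smul_smul, sub_eq_add_neg, ← neg_smul]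
  congr 2
  · ring
  · rw [← neg_smul]; congr 1; ring
end

section
/- There is a universal constant C > 0 such that for all δ, ε ∈ (0, 1/2] there exists an odd real polynomial P_R of degree at most C·(1/δ)·log(1/ε) satisfying |P_R(x)| ≤ 1 for all x ∈ [−1,1] and |P_R(x) − (2/π)·arcsin(x)| ≤ ε for all x ∈ [−1+δ, 1−δ]. -/
open Polynomial
open scoped Topology

noncomputable section ArcsinAux

/-- `bc n = centralBinom n / 4^n`. -/
def bcA (n : ℕ) : ℝ := (Nat.centralBinom n : ℝ) / 4 ^ n

lemma bcA_pos (n : ℕ) : 0 < bcA n :=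
  div_pos (by exact_mod_cast Nat.centralBinom_pos n) (by positivity)

lemma bcA_zero : bcA 0 = 1 := by simp [bcA, Nat.centralBinom]

lemma bcA_rec (n : ℕ) : (2 * ((n : ℝ) + 1)) * bcA (n + 1) = (2 * n + 1) * bcA n := by
  have h : ((n : ℝ) + 1) * (Nat.centralBinom (n + 1) : ℝ)
      = 2 * (2 * n + 1) * (Nat.centralBinom n : ℝ) := by
    exact_mod_cast Nat.succ_mul_centralBinom_succ n
  have h4 : (4 : ℝ) ^ (n + 1) = 4 * 4 ^ n := by ring
  rw [bcA, bcA, h4]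
  have h4n : (4 : ℝ) ^ n ≠ 0 := by positivity
  field_simp
  linear_combination 2 * h

lemma bcA_le_one (n : ℕ) : bcA n ≤ 1 := by
  induction n with
  | zero => rw [bcA_zero]
  | succ n ih =>
    have h := bcA_rec n
    have hpos : (0:ℝ) < 2 * ((n : ℝ) + 1) := by positivity
    have : bcA (n + 1) = (2 * n + 1) / (2 * ((n:ℝ) + 1)) * bcA n := by
      field_simp at h ⊢; linarith
    rw [this]
    have h1 : (2 * (n:ℝ) + 1) / (2 * ((n:ℝ) + 1)) ≤ 1 := by
      rw [div_le_one hpos]; linarith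
    nlinarith [bcA_pos n]


def uA (y : ℝ) : ℝ := ∑' n : ℕ, bcA n * y ^ n

def uA' (y : ℝ) : ℝ := ∑' n : ℕ, ((n : ℝ) + 1) * bcA (n + 1) * y ^ n

lemma summable_geom_aux {r : ℝ} (hr : |r| < 1) : Summable fun n : ℕ => ((n : ℝ) + 1) * |r| ^ n := by
  have h1 : Summable fun n : ℕ => (n : ℝ) * |r| ^ n := by
    simpa using summable_pow_mul_geometric_of_norm_lt_one 1 (by simpa using hr)
  have h2 : Summable fun n : ℕ => |r| ^ n := summable_geometric_of_lt_one (abs_nonneg r) hr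
  simpa [add_mul] using h1.add h2

lemma summable_uA {y : ℝ} (hy : |y| < 1) : Summable fun n : ℕ => bcA n * y ^ n := by
  apply Summable.of_norm_bounded (summable_geometric_of_lt_one (abs_nonneg y) hy)
  intro n
  rw [norm_mul, norm_pow, Real.norm_eq_abs, Real.norm_eq_abs, abs_of_pos (bcA_pos n)]
  calc bcA n * |y| ^ n ≤ 1 * |y| ^ n :=
        mul_le_mul_of_nonneg_right (bcA_le_one n) (by positivity)
    _ = |y| ^ n := one_mul _

lemma summable_uA' {y : ℝ} (hy : |y| < 1) :
    Summable fun n : ℕ => ((n : ℝ) + 1) * bcA (n + 1) * y ^ n := by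
  apply Summable.of_norm_bounded (summable_geom_aux hy)
  intro n
  rw [norm_mul, norm_mul, norm_pow, Real.norm_eq_abs, Real.norm_eq_abs, Real.norm_eq_abs,
    abs_of_pos (bcA_pos (n+1)), abs_of_nonneg (by positivity : (0:ℝ) ≤ (n:ℝ)+1)]
  have h : ((n:ℝ)+1) * bcA (n+1) * |y|^n ≤ ((n:ℝ)+1) * 1 * |y|^n := by
    gcongr
    exact bcA_le_one (n+1)
  simpa using h

lemma hasDerivAt_uA {y : ℝ} (hy : |y| < 1) : HasDerivAt uA (uA' y) y := by
  set r : ℝ := (1 + |y|) / 2 with hrdef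
  have hr1 : r < 1 := by rw [hrdef]; linarith
  have hr0 : (0:ℝ) ≤ r := by positivity
  have hrhalf : (1:ℝ)/2 ≤ r := by rw [hrdef]; linarith [abs_nonneg y]
  have hyr : |y| < r := by rw [hrdef]; linarith
  have habs : |r| = r := abs_of_nonneg hr0
  have hsum_bound : Summable fun n : ℕ => 2 * (((n:ℝ) + 1) * r ^ n) := by
    refine ((summable_geom_aux (r := r) (by rw [habs]; exact hr1)).mul_left 2).congr ?_
    intro n; rw [habs]
  have key : HasDerivAt (fun z => ∑' n : ℕ, bcA n * z ^ n)
      (∑' n : ℕ, bcA n * ((n : ℝ) * y ^ (n - 1))) y := by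
    apply hasDerivAt_tsum_of_isPreconnected hsum_bound (isOpen_Ioo (a := -r) (b := r))
      (Convex.isPreconnected (convex_Ioo _ _))
      (g := fun n z => bcA n * z ^ n) (g' := fun n z => bcA n * ((n:ℝ) * z ^ (n - 1)))
      (y₀ := 0)
    · intro n z _
      exact (hasDerivAt_pow n z).const_mul (bcA n)
    · intro n z hz
      have hzr : |z| ≤ r := by rw [abs_le]; exact ⟨hz.1.le, hz.2.le⟩
      rw [Real.norm_eq_abs, abs_mul, abs_of_pos (bcA_pos n), abs_mul, abs_pow, Nat.abs_cast]
      have h1 : bcA n * ((n:ℝ) * |z| ^ (n-1)) ≤ 1 * ((n:ℝ) * r ^ (n-1)) := by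
        apply mul_le_mul (bcA_le_one n) _ (by positivity) one_pos.le
        exact mul_le_mul_of_nonneg_left (pow_le_pow_left₀ (abs_nonneg z) hzr _) (by positivity)
      have h2 : (n:ℝ) * r ^ (n-1) ≤ 2 * (((n:ℝ)+1) * r ^ n) := by
        rcases n with _ | m
        · norm_num
        · have hm : m + 1 - 1 = m := rfl
          rw [hm]
          have hrm : (0:ℝ) ≤ r ^ m := by positivity
          have hpow : r ^ m ≤ 2 * r ^ (m+1) := by
            have : r ^ m * 1 ≤ r ^ m * (2 * r) := by nlinarith
            calc r ^ m = r ^ m * 1 := (mul_one _).symm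
              _ ≤ r ^ m * (2 * r) := this
              _ = 2 * r ^ (m+1) := by ring
          have hc : ((m:ℝ)+1) ≤ ((m+1:ℕ):ℝ) + 1 := by push_cast; linarith
          calc ((m+1:ℕ):ℝ) * r ^ m ≤ ((m+1:ℕ):ℝ) * (2 * r ^ (m+1)) := by
                apply mul_le_mul_of_nonneg_left hpow (by positivity)
            _ ≤ 2 * ((((m+1:ℕ)):ℝ) + 1) * r ^ (m+1) := by
                have : (0:ℝ) ≤ r ^ (m+1) := by positivity
                nlinarith
            _ = 2 * (((((m+1:ℕ)):ℝ) + 1) * r ^ (m+1)) := by ring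
      calc bcA n * ((n:ℝ) * |z| ^ (n-1)) ≤ 1 * ((n:ℝ) * r ^ (n-1)) := h1
        _ = (n:ℝ) * r ^ (n-1) := one_mul _
        _ ≤ 2 * (((n:ℝ)+1) * r ^ n) := h2
    · simp only [Set.mem_Ioo]; constructor <;> linarith
    · exact summable_uA (by simp)
    · exact abs_lt.mp hyr |> fun h => Set.mem_Ioo.mpr h
  have hshift : (∑' n : ℕ, bcA n * ((n : ℝ) * y ^ (n - 1))) = uA' y := by
    have hs : Summable fun n : ℕ => bcA n * ((n : ℝ) * y ^ (n - 1)) := by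
      rw [← summable_nat_add_iff 1]
      refine (summable_uA' hy).congr fun n => ?_
      push_cast
      ring_nf
    rw [Summable.tsum_eq_zero_add hs]
    simp only [Nat.cast_zero, zero_mul, mul_zero, zero_add]
    rw [uA']
    apply tsum_congr
    intro n
    push_cast
    ring_nf
  rw [← hshift]
  exact key


lemma uA_ode {y : ℝ} (hy : |y| < 1) : 2 * (1 - y) * uA' y = uA y := by
  have hs' := summable_uA' hy
  have hsu := summable_uA hy
  -- ∑' n, 2*n*bc n*y^n  (this equals 2*y*u' y)
  have hsn : Summable fun n : ℕ => 2 * (n : ℝ) * bcA n * y ^ n := by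
    rw [← summable_nat_add_iff 1]
    apply (((summable_uA' hy).mul_left 2).mul_right y).congr
    intro n; push_cast; ring
  have hyu : 2 * y * uA' y = ∑' n : ℕ, 2 * (n : ℝ) * bcA n * y ^ n := by
    rw [uA', ← tsum_mul_left]
    rw [Summable.tsum_eq_zero_add hsn]
    simp only [Nat.cast_zero, mul_zero, zero_mul, zero_add]
    apply tsum_congr
    intro n; push_cast; ring
  have h2u : 2 * uA' y = ∑' n : ℕ, 2 * ((n : ℝ) + 1) * bcA (n + 1) * y ^ n := by
    rw [uA', ← tsum_mul_left]
    apply tsum_congr; intro n; ring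
  have : 2 * (1 - y) * uA' y = 2 * uA' y - 2 * y * uA' y := by ring
  rw [this, hyu, h2u, ← Summable.tsum_sub ((hs'.mul_left 2).congr (by intro n; push_cast; ring)) hsn]
  rw [uA]
  apply tsum_congr
  intro n
  have h := bcA_rec n
  push_cast
  linear_combination (y:ℝ) ^ n * h

lemma uA_sq {y : ℝ} (hy : |y| < 1) : uA y ^ 2 * (1 - y) = 1 := by
  -- the function φ has zero derivative on (-1,1)
  set φ : ℝ → ℝ := fun z => uA z ^ 2 * (1 - z) with hφ
  have hderiv : ∀ z, |z| < 1 → HasDerivAt φ 0 z := by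
    intro z hz
    have h1 : HasDerivAt (fun w => uA w ^ 2 * (1 - w))
        ((2 * uA z * uA' z) * (1 - z) + uA z ^ 2 * (-1)) z := by
      have hu := hasDerivAt_uA hz
      have hsq : HasDerivAt (fun w => uA w ^ 2) (2 * uA z * uA' z) z := by
        have := hu.pow 2
        exact this.congr_deriv (by rw [show (2:ℕ) - 1 = 1 from rfl, pow_one]; ring)
      have hlin : HasDerivAt (fun w : ℝ => 1 - w) (-1) z := by
        simpa using (hasDerivAt_id z).const_sub 1
      exact hsq.mul hlin
    have hzero : (2 * uA z * uA' z) * (1 - z) + uA z ^ 2 * (-1) = 0 := by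
      have h := uA_ode hz
      linear_combination (uA z) * h
    rwa [hzero] at h1
  -- constancy on [min 0 y, max 0 y]
  have hconst : φ y = φ 0 := by
    rcases le_or_gt 0 y with h0 | h0
    · have := constant_of_has_deriv_right_zero (f := φ) (a := 0) (b := y)
        (fun x hx => by
          have hx1 : |x| < 1 := by
            rw [abs_lt]; constructor <;> [linarith [hx.1]; linarith [hx.2, hy, abs_lt.mp hy]]
          exact ((hderiv x hx1).continuousAt).continuousWithinAt)
        (fun x hx => by
          have hx1 : |x| < 1 := by
            rw [abs_lt]; constructor <;> [linarith [hx.1]; linarith [hx.2, abs_lt.mp hy]]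
          exact (hderiv x hx1).hasDerivWithinAt)
      exact this y (Set.mem_Icc.mpr ⟨h0, le_refl y⟩)
    · have := constant_of_has_deriv_right_zero (f := φ) (a := y) (b := 0)
        (fun x hx => by
          have hx1 : |x| < 1 := by
            rw [abs_lt]; constructor <;> [linarith [hx.1, abs_lt.mp hy]; linarith [hx.2]]
          exact ((hderiv x hx1).continuousAt).continuousWithinAt)
        (fun x hx => by
          have hx1 : |x| < 1 := by
            rw [abs_lt]; constructor <;> [linarith [hx.1, abs_lt.mp hy]; linarith [hx.2]]
          exact (hderiv x hx1).hasDerivWithinAt)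
      exact (this 0 (Set.mem_Icc.mpr ⟨h0.le, le_refl 0⟩)).symm
  have hu0 : uA 0 = 1 := by
    rw [uA, tsum_eq_single 0 (by intro n hn; simp [zero_pow hn])]
    simp [bcA_zero]
  have : φ 0 = 1 := by simp [hφ, hu0]
  calc uA y ^ 2 * (1 - y) = φ y := rfl
    _ = φ 0 := hconst
    _ = 1 := this

lemma uA_eq {y : ℝ} (h0 : 0 ≤ y) (hy : y < 1) : uA y = (Real.sqrt (1 - y))⁻¹ := by
  have habs : |y| < 1 := by rwa [abs_of_nonneg h0]
  have hsq := uA_sq habs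
  have hupos : 1 ≤ uA y := by
    have := Summable.le_tsum (summable_uA habs) 0
      (fun n _ => mul_nonneg (bcA_pos n).le (pow_nonneg h0 n))
    simp [bcA_zero] at this; exact this
  have h1y : (0:ℝ) < 1 - y := by linarith
  have : uA y = Real.sqrt (uA y ^ 2) := (Real.sqrt_sq (by linarith)).symm
  rw [this]
  have : uA y ^ 2 = (1 - y)⁻¹ := by
    field_simp at hsq ⊢
    linarith [hsq]
  rw [this, Real.sqrt_inv]


/-- The arcsin series. -/
def fA (x : ℝ) : ℝ := ∑' n : ℕ, bcA n / (2 * (n:ℝ) + 1) * x ^ (2 * n + 1)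

lemma term_abs_le {x : ℝ} (n : ℕ) :
    |bcA n / (2 * (n:ℝ) + 1) * x ^ (2 * n + 1)| ≤ |x| ^ (2 * n + 1) := by
  rw [abs_mul, abs_pow]
  have h1 : |bcA n / (2 * (n:ℝ) + 1)| ≤ 1 := by
    rw [abs_of_pos (div_pos (bcA_pos n) (by positivity))]
    rw [div_le_one (by positivity)]
    have hn : (0:ℝ) ≤ (n:ℝ) := Nat.cast_nonneg n
    linarith [bcA_le_one n]
  calc |bcA n / (2 * (n:ℝ) + 1)| * |x| ^ (2*n+1) ≤ 1 * |x| ^ (2*n+1) :=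
        mul_le_mul_of_nonneg_right h1 (by positivity)
    _ = _ := one_mul _

lemma summable_fA {x : ℝ} (hx : |x| < 1) :
    Summable fun n : ℕ => bcA n / (2 * (n:ℝ) + 1) * x ^ (2 * n + 1) := by
  have hx2 : |x| ^ 2 < 1 := by nlinarith [abs_nonneg x]
  apply Summable.of_norm_bounded
    ((summable_geometric_of_lt_one (by positivity) hx2).mul_right |x|)
  intro n
  rw [Real.norm_eq_abs]
  calc |bcA n / (2 * (n:ℝ) + 1) * x ^ (2 * n + 1)| ≤ |x| ^ (2 * n + 1) := term_abs_le n
    _ = (|x| ^ 2) ^ n * |x| := by rw [← pow_mul]; ring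

lemma fA_zero : fA 0 = 0 := by
  rw [fA]
  convert tsum_zero with n
  simp

lemma hasDerivAt_fA {x : ℝ} (hx : |x| < 1) :
    HasDerivAt fA ((Real.sqrt (1 - x ^ 2))⁻¹) x := by
  set r : ℝ := (1 + |x|) / 2 with hrdef
  have hr1 : r < 1 := by rw [hrdef]; linarith
  have hr0 : (0:ℝ) < r := by rw [hrdef]; positivity
  have hxr : |x| < r := by rw [hrdef]; linarith
  have hr2 : r ^ 2 < 1 := by nlinarith
  have hsum_bound : Summable fun n : ℕ => (r ^ 2) ^ n :=
    summable_geometric_of_lt_one (by positivity) hr2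
  have key : HasDerivAt (fun z => ∑' n : ℕ, bcA n / (2 * (n:ℝ) + 1) * z ^ (2 * n + 1))
      (∑' n : ℕ, bcA n / (2 * (n:ℝ) + 1) * ((2 * (n:ℝ) + 1) * x ^ (2 * n))) x := by
    apply hasDerivAt_tsum_of_isPreconnected hsum_bound (isOpen_Ioo (a := -r) (b := r))
      (Convex.isPreconnected (convex_Ioo _ _))
      (g := fun n z => bcA n / (2 * (n:ℝ) + 1) * z ^ (2 * n + 1))
      (g' := fun n z => bcA n / (2 * (n:ℝ) + 1) * ((2 * (n:ℝ) + 1) * z ^ (2 * n)))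
      (y₀ := 0)
    · intro n z _
      have := (hasDerivAt_pow (2 * n + 1) z).const_mul (bcA n / (2 * (n:ℝ) + 1))
      refine this.congr_deriv ?_
      push_cast
      ring_nf
    · intro n z hz
      have hzr : |z| ≤ r := by rw [abs_le]; exact ⟨hz.1.le, hz.2.le⟩
      have hne : (2*(n:ℝ)+1) ≠ 0 := by positivity
      have hsimp : bcA n / (2 * (n:ℝ) + 1) * ((2 * (n:ℝ) + 1) * z ^ (2 * n))
          = bcA n * z ^ (2 * n) := by field_simp
      rw [hsimp, Real.norm_eq_abs, abs_mul, abs_pow, abs_of_pos (bcA_pos n)]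
      calc bcA n * |z| ^ (2 * n) ≤ 1 * r ^ (2 * n) := by
            apply mul_le_mul (bcA_le_one n) (pow_le_pow_left₀ (abs_nonneg z) hzr _)
              (by positivity) one_pos.le
        _ = (r ^ 2) ^ n := by rw [one_mul, ← pow_mul]
    · simp only [Set.mem_Ioo]; constructor <;> linarith
    · exact summable_fA (by simp)
    · exact Set.mem_Ioo.mpr (abs_lt.mp hxr)
  have heq : (∑' n : ℕ, bcA n / (2 * (n:ℝ) + 1) * ((2 * (n:ℝ) + 1) * x ^ (2 * n)))
      = (Real.sqrt (1 - x ^ 2))⁻¹ := by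
    have hx2 : 0 ≤ x ^ 2 := sq_nonneg x
    have hx21 : x ^ 2 < 1 := by nlinarith [abs_nonneg x, sq_abs x]
    rw [← uA_eq hx2 hx21, uA]
    apply tsum_congr
    intro n
    have hne : (2*(n:ℝ)+1) ≠ 0 := by positivity
    rw [pow_mul]
    field_simp
  rw [← heq]
  exact key

lemma fA_eq_arcsin {x : ℝ} (hx : |x| < 1) : fA x = Real.arcsin x := by
  set F : ℝ → ℝ := fun z => fA z - Real.arcsin z with hF
  have hderiv : ∀ z, |z| < 1 → HasDerivAt F 0 z := by
    intro z hz
    have hz' := abs_lt.mp hz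
    have h1 := hasDerivAt_fA hz
    have h2 := Real.hasDerivAt_arcsin (by linarith : z ≠ -1) (by linarith : z ≠ 1)
    have := h1.sub h2
    have heq : (Real.sqrt (1 - z ^ 2))⁻¹ - 1 / Real.sqrt (1 - z ^ 2) = 0 := by
      rw [one_div, sub_self]
    rwa [heq] at this
  have hconst : F x = F 0 := by
    rcases le_or_gt 0 x with h0 | h0
    · have := constant_of_has_deriv_right_zero (f := F) (a := 0) (b := x)
        (fun z hz => by
          have hz1 : |z| < 1 := by
            rw [abs_lt]; constructor <;> [linarith [hz.1]; linarith [hz.2, abs_lt.mp hx]]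
          exact ((hderiv z hz1).continuousAt).continuousWithinAt)
        (fun z hz => by
          have hz1 : |z| < 1 := by
            rw [abs_lt]; constructor <;> [linarith [hz.1]; linarith [hz.2, abs_lt.mp hx]]
          exact (hderiv z hz1).hasDerivWithinAt)
      exact this x (Set.mem_Icc.mpr ⟨h0, le_refl x⟩)
    · have := constant_of_has_deriv_right_zero (f := F) (a := x) (b := 0)
        (fun z hz => by
          have hz1 : |z| < 1 := by
            rw [abs_lt]; constructor <;> [linarith [hz.1, abs_lt.mp hx]; linarith [hz.2]]
          exact ((hderiv z hz1).continuousAt).continuousWithinAt)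
        (fun z hz => by
          have hz1 : |z| < 1 := by
            rw [abs_lt]; constructor <;> [linarith [hz.1, abs_lt.mp hx]; linarith [hz.2]]
          exact (hderiv z hz1).hasDerivWithinAt)
      exact (this 0 (Set.mem_Icc.mpr ⟨h0.le, le_refl 0⟩)).symm
  have hF0 : F 0 = 0 := by simp [hF, fA_zero]
  have : fA x - Real.arcsin x = 0 := by rw [← hF0]; exact hconst
  linarith


end ArcsinAux

set_option maxHeartbeats 1000000 in
/-- There is a universal constant `C > 0` such that for all `δ, ε ∈ (0, 1/2]` there is an odd
real polynomial of degree at most `C·(1/δ)·log(1/ε)`, bounded by `1` on `[−1,1]`, that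
approximates `(2/π)·arcsin` to within `ε` on `[−1+δ, 1−δ]`. -/
theorem arcsin_poly_approx :
    ∃ C : ℝ, 0 < C ∧
      ∀ δ ε : ℝ, δ ∈ Set.Ioc (0 : ℝ) (1 / 2) → ε ∈ Set.Ioc (0 : ℝ) (1 / 2) →
        ∃ P : Polynomial ℝ,
          (∀ i : ℕ, i % 2 = 0 → P.coeff i = 0) ∧
          (P.natDegree : ℝ) ≤ C * (1 / δ) * Real.log (1 / ε) ∧
          (∀ x : ℝ, x ∈ Set.Icc (-1 : ℝ) 1 → |P.eval x| ≤ 1) ∧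
          (∀ x : ℝ, x ∈ Set.Icc (-1 + δ) (1 - δ) →
            |P.eval x - (2 / Real.pi) * Real.arcsin x| ≤ ε) := by
  refine ⟨6, by norm_num, ?_⟩
  rintro δ ε ⟨hδ0, hδ2⟩ ⟨hε0, hε2⟩
  have hlog2 : (0.6931471803 : ℝ) < Real.log 2 := Real.log_two_gt_d9
  set L : ℝ := Real.log (1 / ε) with hLdef
  have hL2 : Real.log 2 ≤ L := by
    apply Real.log_le_log (by norm_num)
    rw [le_div_iff₀ hε0]; linarith
  have hL0 : 0 < L := by linarith
  have hLε : L = -Real.log ε := by rw [hLdef, one_div, Real.log_inv]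
  have hδinv : (2:ℝ) ≤ 1/δ := by rw [le_div_iff₀ hδ0]; linarith
  have ha1 : (1:ℝ) ≤ (1/δ) * L := by nlinarith
  obtain ⟨M, hMge, hMle⟩ : ∃ M : ℕ, (1/δ) * L ≤ (M : ℝ) ∧ (M : ℝ) ≤ (1/δ) * L + 2 := by
    refine ⟨⌈(1/δ) * L⌉₊ + 1, ?_, ?_⟩
    · push_cast; linarith [Nat.le_ceil ((1/δ) * L)]
    · push_cast; linarith [Nat.ceil_lt_add_one (by positivity : (0:ℝ) ≤ (1/δ) * L)]
  have hMδ : L ≤ (M : ℝ) * δ := by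
    have h := mul_le_mul_of_nonneg_right hMge hδ0.le
    have he : (1/δ) * L * δ = L := by field_simp
    linarith [he ▸ h]
  set cf : ℕ → ℝ := fun n => bcA n / (2 * (n:ℝ) + 1) with hcf
  have hcf_nonneg : ∀ n, 0 ≤ cf n := fun n => le_of_lt
    (div_pos (bcA_pos n) (by positivity))
  set P : Polynomial ℝ :=
    ∑ n ∈ Finset.range M, Polynomial.C (2 / Real.pi * cf n) * Polynomial.X ^ (2*n+1) with hP
  have hPeval : ∀ x : ℝ,
      P.eval x = ∑ n ∈ Finset.range M, 2 / Real.pi * cf n * x ^ (2*n+1) := by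
    intro x
    rw [hP, Polynomial.eval_finset_sum]
    exact Finset.sum_congr rfl fun n _ => by simp
  refine ⟨P, ?_, ?_, ?_, ?_⟩
  · -- odd coefficients only
    intro i hi
    rw [hP, Polynomial.finset_sum_coeff]
    apply Finset.sum_eq_zero
    intro n _
    rw [Polynomial.coeff_C_mul, Polynomial.coeff_X_pow, if_neg (by omega), mul_zero]
  · -- degree bound
    have hdeg : P.natDegree ≤ 2 * M := by
      rw [hP]
      apply Polynomial.natDegree_sum_le_of_forall_le
      intro n hn
      calc (Polynomial.C (2 / Real.pi * cf n) * Polynomial.X ^ (2*n+1)).natDegree ≤ 2*n+1 :=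
            Polynomial.natDegree_C_mul_X_pow_le _ _
        _ ≤ 2 * M := by
            have := Finset.mem_range.mp hn; omega
    calc (P.natDegree : ℝ) ≤ 2 * (M:ℝ) := by exact_mod_cast hdeg
      _ ≤ 2 * ((1/δ) * L + 2) := by linarith
      _ ≤ 6 * (1/δ) * L := by nlinarith
  · -- bounded by 1 on [-1,1]
    have hg1 : ∑ n ∈ Finset.range M, cf n ≤ Real.pi / 2 := by
      set g : ℝ → ℝ := fun y => ∑ n ∈ Finset.range M, cf n * y ^ (2*n+1) with hg
      have hcont : Continuous g := by
        apply continuous_finset_sum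
        intro n _
        exact continuous_const.mul (continuous_pow _)
      have hbound : ∀ y ∈ Set.Ico (0:ℝ) 1, g y ≤ Real.pi / 2 := by
        intro y hy
        have habs : |y| < 1 := by rw [abs_of_nonneg hy.1]; exact hy.2
        have h1 : g y ≤ fA y := by
          apply Summable.sum_le_tsum (Finset.range M)
            (fun n _ => mul_nonneg (hcf_nonneg n) (pow_nonneg hy.1 _))
            (summable_fA habs)
        have h2 : fA y = Real.arcsin y := fA_eq_arcsin habs
        linarith [Real.arcsin_le_pi_div_two y]
      have htend : Filter.Tendsto g (𝓝[<] (1:ℝ)) (𝓝 (g 1)) :=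
        (hcont.tendsto 1).mono_left nhdsWithin_le_nhds
      have hev : ∀ᶠ y in 𝓝[<] (1:ℝ), g y ≤ Real.pi / 2 := by
        filter_upwards [Ico_mem_nhdsLT_of_mem
          (by constructor <;> norm_num : (1:ℝ) ∈ Set.Ioc (0:ℝ) 1)] with y hy
        exact hbound y hy
      have := le_of_tendsto htend hev
      simpa [hg] using this
    intro x hx
    have hx1 : |x| ≤ 1 := abs_le.mpr ⟨hx.1, hx.2⟩
    rw [hPeval]
    have h2π : (0:ℝ) ≤ 2 / Real.pi := by positivity
    calc |∑ n ∈ Finset.range M, 2 / Real.pi * cf n * x ^ (2*n+1)|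
        ≤ ∑ n ∈ Finset.range M, |2 / Real.pi * cf n * x ^ (2*n+1)| :=
          Finset.abs_sum_le_sum_abs _ _
      _ ≤ ∑ n ∈ Finset.range M, 2 / Real.pi * cf n := by
          apply Finset.sum_le_sum
          intro n _
          rw [abs_mul, abs_mul, abs_of_nonneg h2π, abs_of_nonneg (hcf_nonneg n), abs_pow]
          calc 2 / Real.pi * cf n * |x| ^ (2*n+1) ≤ 2 / Real.pi * cf n * 1 := by
                apply mul_le_mul_of_nonneg_left (pow_le_one₀ (abs_nonneg x) hx1)
                  (mul_nonneg h2π (hcf_nonneg n))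
            _ = 2 / Real.pi * cf n := mul_one _
      _ = 2 / Real.pi * ∑ n ∈ Finset.range M, cf n := by rw [Finset.mul_sum]
      _ ≤ 2 / Real.pi * (Real.pi / 2) := mul_le_mul_of_nonneg_left hg1 h2π
      _ = 1 := by field_simp
  · -- approximation on [-1+δ, 1-δ]
    intro x hx
    have hxd : |x| ≤ 1 - δ := abs_le.mpr ⟨by linarith [hx.1], hx.2⟩
    have hx1 : |x| < 1 := by linarith
    have harcsin : Real.arcsin x = fA x := (fA_eq_arcsin hx1).symm
    have hsum := summable_fA hx1
    set s : ℝ := 1 - δ with hs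
    have hs0 : (0:ℝ) ≤ s := by rw [hs]; linarith
    have hs1 : s < 1 := by rw [hs]; linarith
    set q : ℝ := s ^ 2 with hq
    have hq0 : (0:ℝ) ≤ q := by positivity
    have hq1 : q < 1 := by rw [hq]; nlinarith
    have hq_ge : δ ≤ 1 - q := by rw [hq, hs]; nlinarith
    -- the tail
    have hsumtail : Summable fun n : ℕ => cf (n + M) * x ^ (2*(n+M)+1) :=
      (summable_nat_add_iff (f := fun n : ℕ => cf n * x ^ (2*n+1)) M).2 hsum
    have hkey : (∑ n ∈ Finset.range M, cf n * x ^ (2*n+1)) - fA x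
        = -(∑' n : ℕ, cf (n + M) * x ^ (2*(n+M)+1)) := by
      have h := Summable.sum_add_tsum_nat_add M hsum
      rw [fA]
      linarith [h]
    have hterm : ∀ n : ℕ, |cf (n + M) * x ^ (2*(n+M)+1)|
        ≤ (1 / (2*(M:ℝ)+1) * s ^ (2*M+1)) * q ^ n := by
      intro n
      have h1 : |cf (n + M) * x ^ (2*(n+M)+1)| ≤ |cf (n+M)| * s ^ (2*(n+M)+1) := by
        rw [abs_mul, abs_pow]
        exact mul_le_mul_of_nonneg_left (pow_le_pow_left₀ (abs_nonneg x) hxd _)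
          (abs_nonneg _)
      have h2 : |cf (n+M)| ≤ 1 / (2*(M:ℝ)+1) := by
        rw [abs_of_nonneg (hcf_nonneg _), hcf]
        apply div_le_div₀ (by norm_num) _ (by positivity) _
        · exact bcA_le_one _
        · push_cast; linarith [Nat.cast_nonneg (α := ℝ) n]
      have h3 : s ^ (2*(n+M)+1) = s ^ (2*M+1) * q ^ n := by
        rw [hq, ← pow_mul]
        rw [← pow_add]
        congr 1
        ring
      calc |cf (n + M) * x ^ (2*(n+M)+1)| ≤ |cf (n+M)| * s ^ (2*(n+M)+1) := h1
        _ ≤ 1 / (2*(M:ℝ)+1) * s ^ (2*(n+M)+1) := by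
            apply mul_le_mul_of_nonneg_right h2 (by positivity)
        _ = (1 / (2*(M:ℝ)+1) * s ^ (2*M+1)) * q ^ n := by rw [h3]; ring
    have htail : |∑' n : ℕ, cf (n + M) * x ^ (2*(n+M)+1)| ≤ ε := by
      have hgeo : Summable fun n : ℕ => (1 / (2*(M:ℝ)+1) * s ^ (2*M+1)) * q ^ n :=
        (summable_geometric_of_lt_one hq0 hq1).mul_left _
      have habs_sum : Summable fun n : ℕ => |cf (n + M) * x ^ (2*(n+M)+1)| := hsumtail.abs
      have h1 : |∑' n : ℕ, cf (n + M) * x ^ (2*(n+M)+1)|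
          ≤ ∑' n : ℕ, |cf (n + M) * x ^ (2*(n+M)+1)| := by
        have := norm_tsum_le_tsum_norm (f := fun n : ℕ => cf (n + M) * x ^ (2*(n+M)+1))
          (by simpa only [Real.norm_eq_abs] using habs_sum)
        simpa only [Real.norm_eq_abs] using this
      have h2 : (∑' n : ℕ, |cf (n + M) * x ^ (2*(n+M)+1)|)
          ≤ ∑' n : ℕ, (1 / (2*(M:ℝ)+1) * s ^ (2*M+1)) * q ^ n :=
        Summable.tsum_le_tsum hterm habs_sum hgeo
      have h3 : (∑' n : ℕ, (1 / (2*(M:ℝ)+1) * s ^ (2*M+1)) * q ^ n)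
          = (1 / (2*(M:ℝ)+1) * s ^ (2*M+1)) * (1 - q)⁻¹ := by
        rw [tsum_mul_left, tsum_geometric_of_lt_one hq0 hq1]
      -- numeric bound
      have hse : s ≤ Real.exp (-δ) := by
        have := Real.add_one_le_exp (-δ); rw [hs]; linarith
      have hsM : s ^ (2*M+1) ≤ ε ^ 2 := by
        have e1 : s ^ (2*M+1) ≤ s ^ (2*M) :=
          pow_le_pow_of_le_one hs0 hs1.le (Nat.le_succ _)
        have e2 : s ^ (2*M) ≤ Real.exp (-δ) ^ (2*M) :=
          pow_le_pow_left₀ hs0 hse _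
        have e3 : Real.exp (-δ) ^ (2*M) = Real.exp (-(2*(M:ℝ)*δ)) := by
          rw [← Real.exp_nat_mul]
          congr 1
          push_cast
          ring
        have e4 : Real.exp (-(2*(M:ℝ)*δ)) ≤ Real.exp (2 * Real.log ε) := by
          apply Real.exp_le_exp.mpr
          rw [hLε] at hMδ
          linarith
        have e5 : Real.exp (2 * Real.log ε) = ε ^ 2 := by
          rw [two_mul, Real.exp_add, Real.exp_log hε0]
          ring
        calc s ^ (2*M+1) ≤ s ^ (2*M) := e1
          _ ≤ Real.exp (-δ) ^ (2*M) := e2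
          _ = Real.exp (-(2*(M:ℝ)*δ)) := e3
          _ ≤ Real.exp (2 * Real.log ε) := e4
          _ = ε ^ 2 := e5
      have hC : (1:ℝ) ≤ (2*(M:ℝ)+1) * δ := by
        have h2L : (1:ℝ) ≤ 2 * L := by linarith
        linarith [hMδ, hδ0.le]
      have hinv : (1 - q)⁻¹ ≤ δ⁻¹ := by
        apply inv_anti₀ hδ0
        exact hq_ge
      have hfinal : (1 / (2*(M:ℝ)+1) * s ^ (2*M+1)) * (1 - q)⁻¹ ≤ ε := by
        have hM1 : (0:ℝ) < 2*(M:ℝ)+1 := by positivity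
        have step1 : (1 / (2*(M:ℝ)+1) * s ^ (2*M+1)) * (1 - q)⁻¹
            ≤ (1 / (2*(M:ℝ)+1) * ε ^ 2) * δ⁻¹ := by
          apply mul_le_mul _ hinv (inv_nonneg.mpr (by linarith)) (by positivity)
          exact mul_le_mul_of_nonneg_left hsM (by positivity)
        have step2 : (1 / (2*(M:ℝ)+1) * ε ^ 2) * δ⁻¹ = ε ^ 2 / ((2*(M:ℝ)+1) * δ) := by
          field_simp
        have step3 : ε ^ 2 / ((2*(M:ℝ)+1) * δ) ≤ ε := by
          rw [div_le_iff₀ (mul_pos (by positivity) hδ0)]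
          nlinarith [mul_le_mul_of_nonneg_left hC hε0.le, hε2, hε0.le]
        calc (1 / (2*(M:ℝ)+1) * s ^ (2*M+1)) * (1 - q)⁻¹
            ≤ (1 / (2*(M:ℝ)+1) * ε ^ 2) * δ⁻¹ := step1
          _ = ε ^ 2 / ((2*(M:ℝ)+1) * δ) := step2
          _ ≤ ε := step3
      calc |∑' n : ℕ, cf (n + M) * x ^ (2*(n+M)+1)|
          ≤ ∑' n : ℕ, |cf (n + M) * x ^ (2*(n+M)+1)| := h1
        _ ≤ ∑' n : ℕ, (1 / (2*(M:ℝ)+1) * s ^ (2*M+1)) * q ^ n := h2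
        _ = (1 / (2*(M:ℝ)+1) * s ^ (2*M+1)) * (1 - q)⁻¹ := h3
        _ ≤ ε := hfinal
    -- put it together
    rw [hPeval, harcsin]
    have hfact : ∑ n ∈ Finset.range M, 2 / Real.pi * cf n * x ^ (2*n+1)
        = 2 / Real.pi * ∑ n ∈ Finset.range M, cf n * x ^ (2*n+1) := by
      rw [Finset.mul_sum]
      exact Finset.sum_congr rfl fun n _ => by ring
    rw [hfact, ← mul_sub, abs_mul, abs_of_nonneg (by positivity : (0:ℝ) ≤ 2 / Real.pi)]
    have hπ : 2 / Real.pi ≤ 1 := by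
      rw [div_le_one Real.pi_pos]
      linarith [Real.pi_gt_three]
    calc 2 / Real.pi * |(∑ n ∈ Finset.range M, cf n * x ^ (2*n+1)) - fA x|
        ≤ 1 * |(∑ n ∈ Finset.range M, cf n * x ^ (2*n+1)) - fA x| :=
          mul_le_mul_of_nonneg_right hπ (abs_nonneg _)
      _ = |(∑ n ∈ Finset.range M, cf n * x ^ (2*n+1)) - fA x| := one_mul _
      _ = |∑' n : ℕ, cf (n + M) * x ^ (2*(n+M)+1)| := by rw [hkey, abs_neg]
      _ ≤ ε := htail
end

section
/- Let L ∈ (0, 1/e) and let q be a positive integer. Then for every x with |x| ≤ L, the q-th derivative of arcsin satisfies |arcsin^{(q)}(x)| ≤ q^q / (1 − e·L). -/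
open Real Set Finset

private lemma arcsin_aux_pos {ε x : ℝ} (hε : ε = 1 ∨ ε = -1) (hx : x ∈ Set.Ioo (-1:ℝ) 1) :
    0 < 1 + ε * x := by
  rcases hε with rfl | rfl <;> obtain ⟨h1, h2⟩ := hx <;> nlinarith

private lemma arcsin_aux_formula (ε : ℝ) (hε : ε = 1 ∨ ε = -1) (n : ℕ) :
    ∀ x ∈ Set.Ioo (-1:ℝ) 1,
      iteratedDerivWithin n (fun y : ℝ => (1 + ε * y) ^ (-(1/2) : ℝ)) (Set.Ioo (-1) 1) x
      = (-ε)^n * (∏ j ∈ Finset.range n, ((j:ℝ) + 1/2)) * (1 + ε * x) ^ (-(1/2) - n : ℝ) := by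
  induction n with
  | zero =>
    intro x hx
    simp
  | succ n IH =>
    intro x hx
    have hUD : UniqueDiffOn ℝ (Set.Ioo (-1:ℝ) 1) := uniqueDiffOn_Ioo _ _
    rw [iteratedDerivWithin_succ]
    rw [derivWithin_congr (fun y hy => IH y hy) (IH x hx)]
    rw [derivWithin_of_isOpen isOpen_Ioo hx]
    have hpos : 0 < 1 + ε * x := arcsin_aux_pos hε hx
    have hbase : HasDerivAt (fun y : ℝ => 1 + ε * y) ε x := by
      simpa using ((hasDerivAt_id x).const_mul ε).const_add 1
    have hr : HasDerivAt (fun z : ℝ => z ^ (-(1/2) - n : ℝ))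
        ((-(1/2) - n) * (1 + ε * x) ^ ((-(1/2) - n) - 1 : ℝ)) (1 + ε * x) :=
      Real.hasDerivAt_rpow_const (Or.inl hpos.ne')
    have h := ((hr.comp x hbase).const_mul ((-ε)^n * (∏ j ∈ Finset.range n, ((j:ℝ) + 1/2))))
    have hd : deriv (fun y : ℝ => (-ε)^n * (∏ j ∈ Finset.range n, ((j:ℝ) + 1/2)) *
        (1 + ε * y) ^ (-(1/2) - n : ℝ)) x
        = (-ε)^n * (∏ j ∈ Finset.range n, ((j:ℝ) + 1/2)) *
          ((-(1/2) - n) * (1 + ε * x) ^ ((-(1/2) - n) - 1 : ℝ) * ε) := h.deriv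
    rw [hd]
    have hexp : ((-(1/2) - n) - 1 : ℝ) = -(1/2) - ((n+1 : ℕ) : ℝ) := by push_cast; ring
    rw [hexp, Finset.prod_range_succ]
    push_cast
    ring

private lemma arcsin_aux_contDiffOn (ε : ℝ) (hε : ε = 1 ∨ ε = -1) (m : ℕ) :
    ContDiffOn ℝ m (fun y : ℝ => (1 + ε * y) ^ (-(1/2) : ℝ)) (Set.Ioo (-1:ℝ) 1) := by
  intro y hy
  have hpos : 0 < 1 + ε * y := arcsin_aux_pos hε hy
  have h1 : ContDiffAt ℝ m (fun z : ℝ => z ^ (-(1/2) : ℝ)) (1 + ε * y) :=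
    Real.contDiffAt_rpow_const_of_ne hpos.ne'
  have h2 : ContDiffAt ℝ m (fun y : ℝ => 1 + ε * y) y := by fun_prop
  exact (h1.comp y h2).contDiffWithinAt

/-- `∏_{j<n} (j+1/2) ≤ n!` -/
private lemma arcsin_aux_prod_le (n : ℕ) :
    (∏ j ∈ Finset.range n, ((j:ℝ) + 1/2)) ≤ (n.factorial : ℝ) := by
  have := Finset.prod_range_add_one_eq_factorial n
  calc (∏ j ∈ Finset.range n, ((j:ℝ) + 1/2))
      ≤ ∏ j ∈ Finset.range n, ((j:ℝ) + 1) := by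
        apply Finset.prod_le_prod
        · intro i _; positivity
        · intro i _; norm_num
    _ = (n.factorial : ℝ) := by
        rw [← Finset.prod_range_add_one_eq_factorial]; push_cast; ring

private lemma arcsin_aux_prod_nonneg (n : ℕ) :
    0 ≤ (∏ j ∈ Finset.range n, ((j:ℝ) + 1/2)) := by
  apply Finset.prod_nonneg; intro i _; positivity

/-- key arithmetic: `(p+1)! * c^p ≤ (p+1)^(p+1)` with `c = (1 - e⁻¹)⁻¹`. -/
private lemma arcsin_aux_arith (p : ℕ) :
    ((p+1).factorial : ℝ) * ((1 - (Real.exp 1)⁻¹)⁻¹)^p ≤ ((p:ℝ)+1)^(p+1) := by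
  have he : (2:ℝ) ≤ Real.exp 1 := by
    have := Real.add_one_le_exp (1:ℝ); linarith
  have hinv : (Real.exp 1)⁻¹ ≤ 1/2 := by
    rw [inv_le_comm₀ (by positivity) (by norm_num)]
    linarith
  have hcpos : (0:ℝ) < 1 - (Real.exp 1)⁻¹ := by
    have : (0:ℝ) < (Real.exp 1)⁻¹ := by positivity
    linarith
  have hc2 : (1 - (Real.exp 1)⁻¹)⁻¹ ≤ 2 := by
    rw [inv_le_comm₀ hcpos (by norm_num)]
    linarith
  have hc0 : (0:ℝ) ≤ (1 - (Real.exp 1)⁻¹)⁻¹ := by positivity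
  induction p with
  | zero => simp
  | succ p IH =>
    have h0 : (0:ℝ) < (p:ℝ)+1 := by positivity
    have hber : (2:ℝ) ≤ (((p:ℝ)+2)/((p:ℝ)+1))^(p+1) := by
      have h1 : (1:ℝ) + ((p+1 : ℕ):ℝ) * ((p:ℝ)+1)⁻¹ ≤ (1 + ((p:ℝ)+1)⁻¹)^(p+1) :=
        one_add_mul_le_pow (by
          have : (0:ℝ) ≤ ((p:ℝ)+1)⁻¹ := by positivity
          linarith) (p+1)
      have h2 : ((p+1 : ℕ):ℝ) * ((p:ℝ)+1)⁻¹ = 1 := by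
        push_cast; field_simp
      have h3 : (1 + ((p:ℝ)+1)⁻¹) = ((p:ℝ)+2)/((p:ℝ)+1) := by
        field_simp; ring
      rw [h2] at h1
      rw [← h3]
      linarith
    have hstep : (1 - (Real.exp 1)⁻¹)⁻¹ * ((p:ℝ)+1)^(p+1) ≤ ((p:ℝ)+2)^(p+1) := by
      calc (1 - (Real.exp 1)⁻¹)⁻¹ * ((p:ℝ)+1)^(p+1)
          ≤ 2 * ((p:ℝ)+1)^(p+1) := mul_le_mul_of_nonneg_right hc2 (by positivity)
        _ ≤ (((p:ℝ)+2)/((p:ℝ)+1))^(p+1) * ((p:ℝ)+1)^(p+1) :=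
            mul_le_mul_of_nonneg_right hber (by positivity)
        _ = ((p:ℝ)+2)^(p+1) := by
            rw [div_pow, div_mul_cancel₀]
            positivity
    calc ((p+1+1).factorial : ℝ) * ((1 - (Real.exp 1)⁻¹)⁻¹)^(p+1)
        = ((p:ℝ)+2) * (((p+1).factorial : ℝ) * ((1 - (Real.exp 1)⁻¹)⁻¹)^p) *
            (1 - (Real.exp 1)⁻¹)⁻¹ := by
          rw [Nat.factorial_succ]
          push_cast
          ring
      _ ≤ ((p:ℝ)+2) * ((p:ℝ)+1)^(p+1) * (1 - (Real.exp 1)⁻¹)⁻¹ :=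
          mul_le_mul_of_nonneg_right
            (mul_le_mul_of_nonneg_left IH (by positivity)) hc0
      _ = ((p:ℝ)+2) * ((1 - (Real.exp 1)⁻¹)⁻¹ * ((p:ℝ)+1)^(p+1)) := by ring
      _ ≤ ((p:ℝ)+2) * ((p:ℝ)+2)^(p+1) :=
          mul_le_mul_of_nonneg_left hstep (by positivity)
      _ = (((p+1:ℕ):ℝ)+1)^(p+1+1) := by
          rw [pow_succ]
          push_cast
          ring

private lemma arcsin_aux_bound (ε : ℝ) (hε : ε = 1 ∨ ε = -1) (L : ℝ) (hL0 : 0 ≤ L) (hL1 : L < 1)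
    (x : ℝ) (hx : |x| ≤ L) (i : ℕ) :
    |iteratedDerivWithin i (fun y : ℝ => (1 + ε * y) ^ (-(1/2) : ℝ)) (Set.Ioo (-1) 1) x|
      ≤ (i.factorial : ℝ) * (1 - L) ^ (-(1/2) - i : ℝ) := by
  obtain ⟨hx1, hx2⟩ := abs_le.mp hx
  have hxm : x ∈ Set.Ioo (-1:ℝ) 1 := ⟨by linarith, by linarith⟩
  rw [arcsin_aux_formula ε hε i x hxm]
  have hpos : 0 < 1 + ε * x := arcsin_aux_pos hε hxm
  have h1L : (0:ℝ) < 1 - L := by linarith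
  have hbase : 1 - L ≤ 1 + ε * x := by rcases hε with rfl | rfl <;> linarith
  have hexp : (-(1/2) - (i:ℝ)) ≤ 0 := by
    have : (0:ℝ) ≤ (i:ℝ) := by positivity
    linarith
  have habs1 : |(-ε)^i| = 1 := by
    rcases hε with rfl | rfl <;> simp
  rw [abs_mul, abs_mul, habs1, one_mul,
    abs_of_nonneg (arcsin_aux_prod_nonneg i),
    abs_of_nonneg (Real.rpow_nonneg hpos.le _)]
  exact mul_le_mul (arcsin_aux_prod_le i)
    (Real.rpow_le_rpow_of_nonpos h1L hbase hexp)
    (Real.rpow_nonneg hpos.le _) (by positivity)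

/-- Derivative bound for arcsin: for `L ∈ (0, 1/e)`, `q ≥ 1`, and `|x| ≤ L`,
`|arcsin^{(q)}(x)| ≤ q^q / (1 − e·L)`. -/
theorem arcsin_iteratedDeriv_bound (L : ℝ) (hL : L ∈ Set.Ioo (0 : ℝ) (Real.exp 1)⁻¹)
    (q : ℕ) (hq : 0 < q) (x : ℝ) (hx : |x| ≤ L) :
    |iteratedDeriv q Real.arcsin x| ≤ (q : ℝ) ^ q / (1 - Real.exp 1 * L) := by
  obtain ⟨hL0, hLe⟩ := hL
  have he2 : (2:ℝ) ≤ Real.exp 1 := by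
    have := Real.add_one_le_exp (1:ℝ); linarith
  have hepos : (0:ℝ) < Real.exp 1 := Real.exp_pos 1
  have hinv : (Real.exp 1)⁻¹ ≤ 1/2 := by
    rw [inv_le_comm₀ (by positivity) (by norm_num)]; linarith
  have hL1 : L < 1 := by linarith
  have h1L : (0:ℝ) < 1 - L := by linarith
  have heL : Real.exp 1 * L < 1 := by
    have h := mul_lt_mul_of_pos_left hLe hepos
    rwa [mul_inv_cancel₀ hepos.ne'] at h
  have hden : (0:ℝ) < 1 - Real.exp 1 * L := by linarith
  have heL1L : 1 - Real.exp 1 * L ≤ 1 - L := by nlinarith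
  have hcpos : (0:ℝ) < 1 - (Real.exp 1)⁻¹ := by
    have : (0:ℝ) < (Real.exp 1)⁻¹ := by positivity
    linarith
  obtain ⟨hx1, hx2⟩ := abs_le.mp hx
  have hxm : x ∈ Set.Ioo (-1:ℝ) 1 := ⟨by linarith, by linarith⟩
  obtain ⟨p, rfl⟩ : ∃ p, q = p + 1 := ⟨q - 1, (Nat.succ_pred_eq_of_pos hq).symm⟩
  rw [iteratedDeriv_succ', Real.deriv_arcsin]
  set s : Set ℝ := Set.Ioo (-1:ℝ) 1 with hs
  have hUD : UniqueDiffOn ℝ s := uniqueDiffOn_Ioo _ _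
  set u : ℝ → ℝ := fun y : ℝ => (1 + (-1) * y) ^ (-(1/2) : ℝ) with hu
  set v : ℝ → ℝ := fun y : ℝ => (1 + 1 * y) ^ (-(1/2) : ℝ) with hv
  have hEq : Set.EqOn (fun y => u y * v y) (fun y : ℝ => 1 / √(1 - y ^ 2)) s := by
    intro y hy
    obtain ⟨hy1, hy2⟩ := hy
    have ha : (0:ℝ) < 1 + (-1) * y := by linarith
    have hb : (0:ℝ) < 1 + 1 * y := by linarith
    have h12 : (1:ℝ) - y^2 = (1 + (-1)*y) * (1 + 1*y) := by ring
    simp only [hu, hv]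
    rw [h12, Real.sqrt_eq_rpow, ← Real.mul_rpow ha.le hb.le,
      Real.rpow_neg (by positivity : (0:ℝ) ≤ (1 + -1 * y) * (1 + 1 * y))]
    exact (one_div _).symm
  -- switch to within-derivatives of u*v
  have hA : |iteratedDeriv p (fun y : ℝ => 1 / √(1 - y ^ 2)) x|
      = ‖iteratedFDerivWithin ℝ p (fun y => u y * v y) s x‖ := by
    rw [← Real.norm_eq_abs, ← norm_iteratedFDeriv_eq_norm_iteratedDeriv,
      ← iteratedFDerivWithin_of_isOpen (f := fun y : ℝ => 1 / √(1 - y ^ 2)) p isOpen_Ioo hxm,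
      iteratedFDerivWithin_congr hEq hxm]
  rw [hA]
  have huCD : ContDiffOn ℝ p u s := arcsin_aux_contDiffOn (-1) (Or.inr rfl) p
  have hvCD : ContDiffOn ℝ p v s := arcsin_aux_contDiffOn 1 (Or.inl rfl) p
  have hlei := norm_iteratedFDerivWithin_mul_le (𝕜 := ℝ) huCD hvCD hUD hxm
    (le_refl (p : WithTop ℕ∞))
  -- bound each summand
  have hterm : ∀ i ∈ Finset.range (p+1),
      (p.choose i : ℝ) * ‖iteratedFDerivWithin ℝ i u s x‖ *
        ‖iteratedFDerivWithin ℝ (p - i) v s x‖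
      ≤ (p.factorial : ℝ) * ((1 - L)⁻¹)^(p+1) := by
    intro i hi
    have hip : i ≤ p := Finset.mem_range_succ_iff.mp hi
    have hbu : ‖iteratedFDerivWithin ℝ i u s x‖
        ≤ (i.factorial : ℝ) * (1 - L) ^ (-(1/2) - i : ℝ) := by
      rw [norm_iteratedFDerivWithin_eq_norm_iteratedDerivWithin, Real.norm_eq_abs]
      exact arcsin_aux_bound (-1) (Or.inr rfl) L hL0.le hL1 x hx i
    have hbv : ‖iteratedFDerivWithin ℝ (p - i) v s x‖
        ≤ ((p-i).factorial : ℝ) * (1 - L) ^ (-(1/2) - (p - i : ℕ) : ℝ) := by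
      rw [norm_iteratedFDerivWithin_eq_norm_iteratedDerivWithin, Real.norm_eq_abs]
      exact arcsin_aux_bound 1 (Or.inl rfl) L hL0.le hL1 x hx (p - i)
    have hmul : (p.choose i : ℝ) * ‖iteratedFDerivWithin ℝ i u s x‖ *
        ‖iteratedFDerivWithin ℝ (p - i) v s x‖
        ≤ (p.choose i : ℝ) * ((i.factorial : ℝ) * (1 - L) ^ (-(1/2) - i : ℝ)) *
          (((p-i).factorial : ℝ) * (1 - L) ^ (-(1/2) - (p - i : ℕ) : ℝ)) := by
      apply mul_le_mul
      · exact mul_le_mul_of_nonneg_left hbu (by positivity)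
      · exact hbv
      · exact norm_nonneg _
      · positivity
    refine hmul.trans (le_of_eq ?_)
    have hradd : (1 - L) ^ (-(1/2) - i : ℝ) * (1 - L) ^ (-(1/2) - (p - i : ℕ) : ℝ)
        = ((1 - L)⁻¹)^(p+1) := by
      rw [← Real.rpow_add h1L]
      have : (-(1/2) - (i:ℝ)) + (-(1/2) - ((p - i : ℕ):ℝ)) = -(((p+1 : ℕ)):ℝ) := by
        rw [Nat.cast_sub hip]
        push_cast
        ring
      rw [this, Real.rpow_neg h1L.le, Real.rpow_natCast, inv_pow]
    have hfact : (p.choose i : ℝ) * (i.factorial : ℝ) * ((p-i).factorial : ℝ)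
        = (p.factorial : ℝ) := by
      rw [← Nat.cast_mul, ← Nat.cast_mul, Nat.choose_mul_factorial_mul_factorial hip]
    calc (p.choose i : ℝ) * ((i.factorial : ℝ) * (1 - L) ^ (-(1/2) - i : ℝ)) *
          (((p-i).factorial : ℝ) * (1 - L) ^ (-(1/2) - (p - i : ℕ) : ℝ))
        = ((p.choose i : ℝ) * (i.factorial : ℝ) * ((p-i).factorial : ℝ)) *
          ((1 - L) ^ (-(1/2) - i : ℝ) * (1 - L) ^ (-(1/2) - (p - i : ℕ) : ℝ)) := by ring
      _ = (p.factorial : ℝ) * ((1 - L)⁻¹)^(p+1) := by rw [hradd, hfact]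
  have hsum : ∑ i ∈ Finset.range (p+1), (p.choose i : ℝ) *
        ‖iteratedFDerivWithin ℝ i u s x‖ * ‖iteratedFDerivWithin ℝ (p - i) v s x‖
      ≤ ((p+1).factorial : ℝ) * ((1 - L)⁻¹)^(p+1) := by
    calc _ ≤ ∑ _i ∈ Finset.range (p+1), (p.factorial : ℝ) * ((1 - L)⁻¹)^(p+1) :=
          Finset.sum_le_sum hterm
      _ = ((p:ℝ)+1) * ((p.factorial : ℝ) * ((1 - L)⁻¹)^(p+1)) := by
          rw [Finset.sum_const, Finset.card_range]
          push_cast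
          ring
      _ = ((p+1).factorial : ℝ) * ((1 - L)⁻¹)^(p+1) := by
          rw [Nat.factorial_succ]
          push_cast
          ring
  have hmain : ‖iteratedFDerivWithin ℝ p (fun y => u y * v y) s x‖
      ≤ ((p+1).factorial : ℝ) * ((1 - L)⁻¹)^(p+1) := hlei.trans hsum
  -- final arithmetic
  rw [le_div_iff₀ hden]
  have h1 : ‖iteratedFDerivWithin ℝ p (fun y => u y * v y) s x‖ * (1 - Real.exp 1 * L)
      ≤ (((p+1).factorial : ℝ) * ((1 - L)⁻¹)^(p+1)) * (1 - Real.exp 1 * L) :=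
    mul_le_mul_of_nonneg_right hmain hden.le
  refine h1.trans ?_
  have hkey : (((p+1).factorial : ℝ) * ((1 - L)⁻¹)^(p+1)) * (1 - Real.exp 1 * L)
      ≤ ((p+1).factorial : ℝ) * ((1 - L)⁻¹)^p := by
    have hle1 : (1 - L)⁻¹ * (1 - Real.exp 1 * L) ≤ 1 := by
      calc (1 - L)⁻¹ * (1 - Real.exp 1 * L) ≤ (1 - L)⁻¹ * (1 - L) :=
            mul_le_mul_of_nonneg_left heL1L (by positivity)
        _ = 1 := inv_mul_cancel₀ h1L.ne'
    calc (((p+1).factorial : ℝ) * ((1 - L)⁻¹)^(p+1)) * (1 - Real.exp 1 * L)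
        = (((p+1).factorial : ℝ) * ((1 - L)⁻¹)^p) * ((1 - L)⁻¹ * (1 - Real.exp 1 * L)) := by
          rw [pow_succ]; ring
      _ ≤ (((p+1).factorial : ℝ) * ((1 - L)⁻¹)^p) * 1 :=
          mul_le_mul_of_nonneg_left hle1 (by positivity)
      _ = ((p+1).factorial : ℝ) * ((1 - L)⁻¹)^p := mul_one _
  refine hkey.trans ?_
  have hcc : (1 - L)⁻¹ ≤ (1 - (Real.exp 1)⁻¹)⁻¹ := by
    apply inv_anti₀ hcpos
    linarith
  calc ((p+1).factorial : ℝ) * ((1 - L)⁻¹)^p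
      ≤ ((p+1).factorial : ℝ) * ((1 - (Real.exp 1)⁻¹)⁻¹)^p := by
        apply mul_le_mul_of_nonneg_left _ (by positivity)
        exact pow_le_pow_left₀ (by positivity) hcc p
    _ ≤ ((p:ℝ)+1)^(p+1) := arcsin_aux_arith p
    _ = ((p+1 : ℕ):ℝ)^(p+1) := by push_cast; ring
end

section
/- Let L ∈ (0, 1/e) and let Q be a positive integer. Let P_Q be the unique polynomial of degree at most Q that interpolates arcsin at the uniform grid points x_j = −L + 2Lj/Q for j = 0, 1, …, Q. Then for every x ∈ [−L, L], |P_Q(x) − arcsin(x)| ≤ 2e·(2L)^{Q+1} / (1 − e·L). -/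
open Polynomial Finset Set

namespace ArcsinAux

noncomputable def dd : ℕ → ℝ := fun n => ∏ i ∈ Finset.range n, ((i : ℝ) + 1/2)

noncomputable def bb (n : ℕ) : ℝ := dd n / n.factorial

noncomputable def hhf : ℝ → ℝ := fun u => (1 - u) ^ (-(1:ℝ)/2)

lemma dd_nonneg (n : ℕ) : 0 ≤ dd n := Finset.prod_nonneg fun i _ => by positivity

lemma dd_succ (n : ℕ) : dd (n+1) = dd n * ((n : ℝ) + 1/2) := Finset.prod_range_succ _ _

lemma dd_le (n : ℕ) : dd n ≤ n.factorial := by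
  calc dd n ≤ ∏ i ∈ Finset.range n, ((i : ℝ) + 1) :=
        Finset.prod_le_prod (fun i _ => by positivity) (fun i _ => by linarith)
    _ = n.factorial := by
        rw [← Finset.prod_range_add_one_eq_factorial n]
        push_cast
        rfl

lemma bb_nonneg (n : ℕ) : 0 ≤ bb n := div_nonneg (dd_nonneg n) (by positivity)

lemma bb_le_one (n : ℕ) : bb n ≤ 1 :=
  div_le_one_of_le₀ (dd_le n) (by positivity)

lemma bb_zero : bb 0 = 1 := by simp [bb, dd]

lemma hasDerivAt_aux (r : ℝ) (t : ℝ) (ht : t < 1) :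
    HasDerivAt (fun u : ℝ => (1 - u) ^ r) (-r * (1 - t) ^ (r - 1)) t := by
  have h1 : HasDerivAt (fun u : ℝ => 1 - u) (-1) t := (hasDerivAt_id t).const_sub 1
  have h2 := (Real.hasDerivAt_rpow_const (x := 1 - t) (p := r)
    (Or.inl (by linarith))).comp t h1
  refine h2.congr_deriv ?_
  ring

lemma iterDeriv {u : ℝ} (hu0 : 0 < u) (hu1 : u < 1) (n : ℕ) :
    ∀ t ∈ Icc (0:ℝ) u, iteratedDerivWithin n hhf (Icc 0 u) t
      = dd n * (1 - t) ^ (-(n:ℝ) - 1/2) := by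
  induction n with
  | zero =>
    intro t ht
    simp only [iteratedDerivWithin_zero, hhf, dd, Finset.range_zero, Finset.prod_empty, one_mul]
    norm_num
  | succ n ih =>
    intro t ht
    have ht1 : t < 1 := lt_of_le_of_lt ht.2 hu1
    have hUD : UniqueDiffWithinAt ℝ (Icc (0:ℝ) u) t := (uniqueDiffOn_Icc hu0) t ht
    rw [iteratedDerivWithin_succ]
    rw [derivWithin_congr ih (ih t ht)]
    have hd : HasDerivAt (fun s : ℝ => dd n * (1 - s) ^ (-(n:ℝ) - 1/2))
        (dd n * (-(-(n:ℝ) - 1/2) * (1 - t) ^ ((-(n:ℝ) - 1/2) - 1))) t :=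
      (hasDerivAt_aux _ t ht1).const_mul _
    rw [hd.hasDerivWithinAt.derivWithin hUD]
    have hexp : (-(n:ℝ) - 1/2) - 1 = -((n:ℕ)+1:ℕ) - 1/2 := by push_cast; ring
    rw [hexp, dd_succ]
    push_cast
    ring

lemma hhf_contDiffOn (m : ℕ) : ContDiffOn ℝ m hhf (Iio (1:ℝ)) := by
  intro t ht
  have h1 : ContDiffAt ℝ m (fun u : ℝ => 1 - u) t := contDiffAt_const.sub contDiffAt_id
  have h2 : ContDiffAt ℝ m (fun x : ℝ => x ^ (-(1:ℝ)/2)) (1 - t) :=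
    Real.contDiffAt_rpow_const_of_ne (by have h1 : t < 1 := ht; intro h; linarith)
  exact (h2.comp t h1).contDiffWithinAt

lemma remainder {u : ℝ} (hu0 : 0 < u) (hu1 : u < 1) (M : ℕ) :
    0 ≤ hhf u - ∑ k ∈ Finset.range (M+1), bb k * u ^ k ∧
    hhf u - ∑ k ∈ Finset.range (M+1), bb k * u ^ k
      ≤ (1 - u) ^ (-(M:ℝ) - 3/2) * u ^ (M+1) := by
  have hIcc : Icc (0:ℝ) u ⊆ Iio 1 := fun t ht => lt_of_le_of_lt ht.2 hu1
  have hcd : ContDiffOn ℝ M hhf (Icc 0 u) := (hhf_contDiffOn M).mono hIcc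
  have hdiff : DifferentiableOn ℝ (iteratedDerivWithin M hhf (Icc 0 u)) (Ioo 0 u) := by
    have hF : DifferentiableOn ℝ (fun t : ℝ => dd M * (1 - t) ^ (-(M:ℝ) - 1/2)) (Ioo 0 u) :=
      fun t ht => (((hasDerivAt_aux _ t (lt_of_lt_of_le ht.2 hu1.le)).const_mul
        (dd M)).differentiableAt).differentiableWithinAt
    exact hF.congr (fun t ht => iterDeriv hu0 hu1 M t (Ioo_subset_Icc_self ht))
  obtain ⟨ξ, hξ, heq⟩ := taylor_mean_remainder_lagrange hu0.ne
    (by rwa [uIcc_of_le hu0.le]) (by rwa [uIcc_of_le hu0.le, uIoo_of_le hu0.le])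
  rw [uIoo_of_le hu0.le] at hξ
  rw [uIcc_of_le hu0.le] at heq
  have hT : taylorWithinEval hhf M (Icc 0 u) 0 u
      = ∑ k ∈ Finset.range (M+1), bb k * u ^ k := by
    rw [taylor_within_apply]
    apply Finset.sum_congr rfl
    intro k hk
    have h0 : (0:ℝ) ∈ Icc (0:ℝ) u := ⟨le_refl _, hu0.le⟩
    rw [iterDeriv hu0 hu1 k 0 h0]
    rw [show (1:ℝ) - 0 = 1 by ring, Real.one_rpow]
    simp [bb, smul_eq_mul]
    ring
  have hξI : ξ ∈ Icc (0:ℝ) u := Ioo_subset_Icc_self hξ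
  rw [iterDeriv hu0 hu1 (M+1) ξ hξI] at heq
  have hξu : ξ < u := hξ.2
  have hξ0 : 0 < ξ := hξ.1
  have hu1' : 0 < 1 - u := by linarith
  have hξ1 : 0 < 1 - ξ := by linarith
  have hexp : (-((M+1:ℕ):ℝ) - 1/2) = -(M:ℝ) - 3/2 := by push_cast; ring
  rw [hexp] at heq
  have hrem : hhf u - ∑ k ∈ Finset.range (M+1), bb k * u ^ k
      = bb (M+1) * (1 - ξ) ^ (-(M:ℝ) - 3/2) * u ^ (M+1) := by
    rw [← hT, heq, sub_zero, bb]
    have hfac : ((M+1).factorial : ℝ) ≠ 0 := by positivity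
    field_simp
  constructor
  · rw [hrem]
    have := bb_nonneg (M+1)
    positivity
  · rw [hrem]
    have h1 : (1 - ξ) ^ (-(M:ℝ) - 3/2) ≤ (1 - u) ^ (-(M:ℝ) - 3/2) := by
      apply Real.rpow_le_rpow_of_nonpos hu1' (by linarith)
      have : (0:ℝ) ≤ (M:ℝ) := Nat.cast_nonneg M
      linarith
    calc bb (M+1) * (1 - ξ) ^ (-(M:ℝ) - 3/2) * u ^ (M+1)
        ≤ 1 * ((1 - u) ^ (-(M:ℝ) - 3/2)) * u ^ (M+1) := by
          apply mul_le_mul_of_nonneg_right _ (by positivity)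
          apply mul_le_mul (bb_le_one _) h1 (by positivity) zero_le_one
      _ = (1 - u) ^ (-(M:ℝ) - 3/2) * u ^ (M+1) := by ring

end ArcsinAux

namespace ArcsinAux

open Filter

lemma tail_bound {u : ℝ} (hu0 : 0 ≤ u) (hu2 : u < 1/2) (N : ℕ) :
    |hhf u - ∑ k ∈ Finset.range (N+1), bb k * u ^ k| ≤ u ^ (N+1) / (1 - u) := by
  have hu1 : u < 1 := by linarith
  have hu1' : 0 < 1 - u := by linarith
  rcases eq_or_lt_of_le hu0 with h0 | h0
  · -- u = 0
    rw [← h0]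
    have hs : ∑ k ∈ Finset.range (N+1), bb k * (0:ℝ) ^ k = 1 := by
      rw [Finset.sum_eq_single_of_mem 0 (by simp)]
      · simp [bb_zero]
      · intro k _ hk
        simp [zero_pow hk]
    rw [hs]
    norm_num [hhf, Real.one_rpow]
  · have hlow := (remainder h0 hu1 N).1
    rw [abs_of_nonneg hlow]
    -- upper bound: for every M ≥ N, value ≤ u^(N+1)/(1-u) + B M
    set val := hhf u - ∑ k ∈ Finset.range (N+1), bb k * u ^ k with hval
    have key : ∀ M : ℕ, N ≤ M →
        val ≤ u ^ (N+1) / (1 - u) + (1 - u) ^ (-(M:ℝ) - 3/2) * u ^ (M+1) := by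
      intro M hM
      have hup := (remainder h0 hu1 M).2
      have hsum : ∑ k ∈ Finset.range (M+1), bb k * u ^ k
          - ∑ k ∈ Finset.range (N+1), bb k * u ^ k
          = ∑ k ∈ Finset.Ico (N+1) (M+1), bb k * u ^ k := by
        rw [Finset.sum_Ico_eq_sub _ (by omega)]
      have hgeom : ∑ k ∈ Finset.Ico (N+1) (M+1), bb k * u ^ k ≤ u ^ (N+1) / (1 - u) := by
        calc ∑ k ∈ Finset.Ico (N+1) (M+1), bb k * u ^ k
            ≤ ∑ k ∈ Finset.Ico (N+1) (M+1), u ^ k := by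
              apply Finset.sum_le_sum
              intro k hk
              have := bb_le_one k
              have := bb_nonneg k
              nlinarith [pow_nonneg hu0 k]
          _ = ∑ j ∈ Finset.range (M+1-(N+1)), u ^ (N+1+j) := by
              rw [Finset.sum_Ico_eq_sum_range]
          _ = u ^ (N+1) * ∑ j ∈ Finset.range (M-N), u ^ j := by
              rw [Finset.mul_sum]
              apply Finset.sum_congr (by congr 1; omega)
              intro j _
              rw [pow_add]
          _ ≤ u ^ (N+1) * (1 / (1 - u)) := by
              apply mul_le_mul_of_nonneg_left _ (pow_nonneg hu0 _)
              rw [le_div_iff₀ hu1']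
              have hg := geom_sum_mul u (M-N)
              nlinarith [pow_nonneg hu0 (M-N)]
          _ = u ^ (N+1) / (1 - u) := by ring
      have : val = ∑ k ∈ Finset.Ico (N+1) (M+1), bb k * u ^ k
          + (hhf u - ∑ k ∈ Finset.range (M+1), bb k * u ^ k) := by
        rw [← hsum]; ring
      rw [this]
      exact add_le_add hgeom hup
    -- B M → 0
    have hq : u / (1 - u) < 1 := by rw [div_lt_one hu1']; linarith
    have hq0 : 0 ≤ u / (1 - u) := div_nonneg hu0 hu1'.le
    have hBeq : ∀ M : ℕ, (1 - u) ^ (-(M:ℝ) - 3/2) * u ^ (M+1)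
        = ((1 - u) ^ (-(3:ℝ)/2) * u) * (u / (1 - u)) ^ M := by
      intro M
      rw [show (-(M:ℝ) - 3/2) = (-(3:ℝ)/2) + (-(M:ℝ)) by ring,
        Real.rpow_add hu1', Real.rpow_neg hu1'.le, Real.rpow_natCast]
      rw [div_pow, pow_succ]
      field_simp
    have hBtend : Tendsto (fun M : ℕ => (1 - u) ^ (-(M:ℝ) - 3/2) * u ^ (M+1)) atTop (nhds 0) := by
      simp only [hBeq]
      rw [show (0:ℝ) = ((1 - u) ^ (-(3:ℝ)/2) * u) * 0 by ring]
      exact Tendsto.const_mul _ (tendsto_pow_atTop_nhds_zero_of_lt_one hq0 hq)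
    have htend := (tendsto_const_nhds (x := u ^ (N+1) / (1 - u))
      (f := atTop (α := ℕ))).add hBtend
    rw [add_zero] at htend
    exact ge_of_tendsto htend (Filter.eventually_atTop.mpr ⟨N, key⟩)

-- combinatorial helpers
lemma nat_prod1 (n : ℕ) : ∏ k ∈ Finset.range n, (n - k) = n.factorial := by
  have h := Finset.prod_range_reflect (fun j => j + 1) n
  rw [Finset.prod_range_add_one_eq_factorial] at h
  rw [← h]
  apply Finset.prod_congr rfl
  intro j hj
  rw [Finset.mem_range] at hj
  omega

lemma nat_prod2 (a c : ℕ) : ∏ k ∈ Finset.Ico a (a + c), (k - a + 1) = c.factorial := by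
  rw [Finset.prod_Ico_eq_prod_range]
  rw [← Finset.prod_range_add_one_eq_factorial c]
  apply Finset.prod_congr (by congr 1; omega)
  intro j _
  congr 1
  omega

lemma fact_mul_fact_le {m Q : ℕ} (h : m + 1 ≤ Q) :
    (m+1).factorial * (Q - m).factorial ≤ Q.factorial := by
  have h1 : m + 1 ≤ Q.choose m := by
    calc m + 1 = (m+1).choose m := (Nat.choose_succ_self_right m).symm
      _ ≤ Q.choose m := Nat.choose_le_choose m h
  have h2 : Q.choose m * m.factorial * (Q - m).factorial = Q.factorial :=
    Nat.choose_mul_factorial_mul_factorial (show m ≤ Q by omega)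
  calc (m+1).factorial * (Q - m).factorial
      = (m+1) * (m.factorial * (Q - m).factorial) := by rw [Nat.factorial_succ]; ring
    _ ≤ Q.choose m * (m.factorial * (Q - m).factorial) := Nat.mul_le_mul_right _ h1
    _ = Q.factorial := by rw [← h2]; ring

end ArcsinAux
set_option maxHeartbeats 1600000 in
/-- Lagrange interpolation error for arcsin: if `L ∈ (0, 1/e)` and `P` is the (unique)
polynomial of degree at most `Q` interpolating arcsin at the uniform grid
`x_j = −L + 2Lj/Q`, `j = 0,…,Q`, then `|P(x) − arcsin x| ≤ 2e·(2L)^{Q+1}/(1 − eL)`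
for all `x ∈ [−L, L]`. -/
theorem arcsin_interpolation_error (L : ℝ) (hL : L ∈ Set.Ioo (0 : ℝ) (Real.exp 1)⁻¹)
    (Q : ℕ) (hQ : 0 < Q) (P : Polynomial ℝ) (hdeg : P.natDegree ≤ Q)
    (hinterp : ∀ j : Fin (Q + 1),
      P.eval (-L + 2 * L * (j : ℕ) / Q) = Real.arcsin (-L + 2 * L * (j : ℕ) / Q)) :
    ∀ x : ℝ, x ∈ Set.Icc (-L) L →
      |P.eval x - Real.arcsin x| ≤ 2 * Real.exp 1 * (2 * L) ^ (Q + 1) / (1 - Real.exp 1 * L) := by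
  obtain ⟨hL0, hLe⟩ := hL
  intro x hx
  have hE : (2.7182818283 : ℝ) < Real.exp 1 := Real.exp_one_gt_d9
  have hE0 : (0:ℝ) < Real.exp 1 := by linarith
  have hEinv : (Real.exp 1)⁻¹ < 1/2 := by
    rw [inv_lt_comm₀ hE0 (by norm_num : (0:ℝ) < 1/2)]
    norm_num
    linarith
  have hL12 : L < 1/2 := lt_trans hLe hEinv
  have hL1 : L < 1 := by linarith
  have heL : Real.exp 1 * L < 1 := by
    have h := mul_lt_mul_of_pos_left hLe hE0
    rwa [mul_inv_cancel₀ (ne_of_gt hE0)] at h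
  have heL0 : 0 < 1 - Real.exp 1 * L := by linarith
  have hQ0 : (0:ℝ) < Q := Nat.cast_pos.mpr hQ
  set hstep : ℝ := 2*L/Q with hhstep
  have hstep0 : 0 < hstep := by positivity
  set v : ℕ → ℝ := fun k => -L + k * hstep with hv
  set N : ℕ := (Q-1)/2 with hN
  have hN1 : 2*N+1 ≤ Q := by omega
  have hN2 : Q+1 ≤ 2*N+3 := by omega
  set Tp : Polynomial ℝ :=
    ∑ n ∈ Finset.range (N+1), Polynomial.C (ArcsinAux.bb n / (2*n+1)) * Polynomial.X^(2*n+1)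
    with hTp
  set S : ℝ → ℝ := fun u => ∑ k ∈ Finset.range (N+1), ArcsinAux.bb k * u ^ k with hS
  set g : ℝ → ℝ := fun y => Real.arcsin y - Tp.eval y with hg
  -- derivative of Tp
  have hTp' : ∀ y : ℝ, Tp.derivative.eval y = S (y^2) := by
    intro y
    rw [hTp]
    simp only [hS]
    rw [Polynomial.derivative_sum, Polynomial.eval_finset_sum]
    apply Finset.sum_congr rfl
    intro n _
    rw [Polynomial.derivative_C_mul_X_pow]
    rw [Polynomial.eval_mul, Polynomial.eval_C, Polynomial.eval_pow, Polynomial.eval_X]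
    have h1 : (2*n+1) - 1 = 2*n := by omega
    rw [h1, pow_mul]
    have h2 : (2*(n:ℝ)+1) ≠ 0 := by positivity
    push_cast
    field_simp
  -- derivative of g on Icc
  have hgderiv : ∀ y ∈ Set.Icc (-L) L,
      HasDerivWithinAt g (ArcsinAux.hhf (y^2) - S (y^2)) (Set.Icc (-L) L) y := by
    intro y hy
    have hy1 : -1 < y := by have := hy.1; linarith
    have hy2 : y < 1 := by have := hy.2; linarith
    have harc := Real.hasDerivAt_arcsin (by linarith : y ≠ -1) (by linarith : y ≠ 1)
    have h1y2 : 0 < 1 - y^2 := by nlinarith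
    have hsqrt : 1 / Real.sqrt (1 - y^2) = ArcsinAux.hhf (y^2) := by
      show _ = (1 - y^2) ^ (-(1:ℝ)/2)
      rw [Real.sqrt_eq_rpow, one_div, ← Real.rpow_neg h1y2.le]
      norm_num
    have hd : HasDerivAt g (1 / Real.sqrt (1 - y^2) - Tp.derivative.eval y) y := by
      rw [hg]
      exact harc.sub (Tp.hasDerivAt y)
    rw [hsqrt, hTp' y] at hd
    exact hd.hasDerivWithinAt
  -- derivative bound
  have hL2 : 0 < 1 - L^2 := by nlinarith
  set ε0 : ℝ := L^(2*N+2) / (1 - L^2) with hε0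
  have hε0nn : 0 ≤ ε0 := div_nonneg (by positivity) hL2.le
  have hdbound : ∀ y ∈ Set.Icc (-L) L, |ArcsinAux.hhf (y^2) - S (y^2)| ≤ ε0 := by
    intro y hy
    have hy1 : -L ≤ y := hy.1
    have hy2 : y ≤ L := hy.2
    have hysq : y^2 ≤ L^2 := by nlinarith
    have hhalf : y^2 < 1/2 := by nlinarith
    have htb := ArcsinAux.tail_bound (sq_nonneg y) hhalf N
    calc |ArcsinAux.hhf (y^2) - S (y^2)| ≤ (y^2)^(N+1) / (1 - y^2) := htb
      _ ≤ L^(2*N+2) / (1 - L^2) := by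
          apply div_le_div₀ (by positivity) ?_ hL2 (by nlinarith)
          calc (y^2)^(N+1) ≤ (L^2)^(N+1) := pow_le_pow_left₀ (sq_nonneg y) hysq _
            _ = L^(2*N+2) := by rw [← pow_mul, show 2*(N+1) = 2*N+2 from by omega]
  -- MVT bound on g
  have hgle : ∀ z ∈ Set.Icc (-L) L, |g z| ≤ ε0 * L := by
    intro z hz
    have h0mem : (0:ℝ) ∈ Set.Icc (-L) L := ⟨by linarith, by linarith⟩
    have hmvt := Convex.norm_image_sub_le_of_norm_hasDerivWithin_le hgderiv
      (fun y hy => by rw [Real.norm_eq_abs]; exact hdbound y hy) (convex_Icc _ _) h0mem hz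
    have hg0 : g 0 = 0 := by
      simp [hg, hTp, Polynomial.eval_finset_sum]
    rw [hg0, sub_zero, sub_zero, Real.norm_eq_abs, Real.norm_eq_abs] at hmvt
    calc |g z| ≤ ε0 * |z| := hmvt
      _ ≤ ε0 * L := mul_le_mul_of_nonneg_left (abs_le.mpr ⟨hz.1, hz.2⟩) hε0nn
  -- interpolation setup
  set sQ : Finset ℕ := Finset.range (Q+1) with hsQ
  have hvinj : Set.InjOn v sQ := by
    intro a _ b _ hab
    simp only [hv] at hab
    have h1 : (a:ℝ) * hstep = b * hstep := by linarith
    have h2 : (a:ℝ) = b := mul_right_cancel₀ (ne_of_gt hstep0) h1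
    exact_mod_cast h2
  have hTpdeg : Tp.natDegree ≤ Q := by
    rw [hTp]
    refine Polynomial.natDegree_sum_le_of_forall_le _ _ fun n hn => ?_
    refine le_trans (Polynomial.natDegree_C_mul_X_pow_le _ _) ?_
    rw [Finset.mem_range] at hn; omega
  have hPTdeg : (P - Tp).degree < (sQ.card : ℕ) := by
    rw [hsQ, Finset.card_range]
    by_cases hPT0 : P - Tp = 0
    · rw [hPT0, Polynomial.degree_zero]
      exact WithBot.bot_lt_coe _
    · rw [Polynomial.degree_eq_natDegree hPT0]
      have := Polynomial.natDegree_sub_le P Tp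
      exact_mod_cast Nat.cast_lt.mpr (by omega : (P - Tp).natDegree < Q+1)
  have hinterp' : ∀ i ∈ sQ, (P - Tp).eval (v i) = g (v i) := by
    intro i hi
    rw [hsQ, Finset.mem_range] at hi
    have hPv : P.eval (v i) = Real.arcsin (v i) := by
      have h := hinterp ⟨i, hi⟩
      have hveq : v i = -L + 2*L*(i:ℕ)/Q := by
        simp only [hv, hhstep]; push_cast; ring
      rw [hveq]
      simpa using h
    simp only [hg, Polynomial.eval_sub, hPv]
  have hPT : P - Tp = Lagrange.interpolate sQ v (fun k => g (v k)) :=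
    Lagrange.eq_interpolate_of_eval_eq (fun k => g (v k)) hvinj hPTdeg hinterp'
  have hevalPT : (P - Tp).eval x
      = ∑ i ∈ sQ, g (v i) * ∏ j ∈ sQ.erase i, ((v i - v j)⁻¹ * (x - v j)) := by
    rw [hPT, Lagrange.interpolate_apply, Polynomial.eval_finset_sum]
    apply Finset.sum_congr rfl
    intro i _
    rw [Polynomial.eval_mul, Polynomial.eval_C]
    congr 1
    rw [Lagrange.basis, Polynomial.eval_prod]
    apply Finset.prod_congr rfl
    intro j _
    simp [Lagrange.basisDivisor]
  -- locate x in the grid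
  have hxL : -L ≤ x := hx.1
  have hxU : x ≤ L := hx.2
  have hfl0 : (0:ℝ) ≤ (x + L)/hstep := div_nonneg (by linarith) hstep0.le
  have hflz : (0:ℤ) ≤ ⌊(x + L)/hstep⌋ := Int.floor_nonneg.mpr hfl0
  set t : ℕ := (⌊(x + L)/hstep⌋).toNat with ht
  set m : ℕ := min (Q-1) t with hm
  have hmQ : m + 1 ≤ Q := by omega
  have htcast : ((t:ℕ):ℝ) = ((⌊(x + L)/hstep⌋ : ℤ) : ℝ) := by
    rw [ht]
    exact_mod_cast congrArg (fun z : ℤ => (z : ℝ)) (Int.toNat_of_nonneg hflz)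
  have htle : (t:ℝ) ≤ (x + L)/hstep := by
    rw [htcast]; exact Int.floor_le _
  have hmle : (m:ℝ) * hstep ≤ x + L := by
    have h1 : (m:ℝ) ≤ t := by exact_mod_cast min_le_right (Q-1) t
    have h2 : (m:ℝ) ≤ (x + L)/hstep := le_trans h1 htle
    calc (m:ℝ) * hstep ≤ ((x + L)/hstep) * hstep :=
          mul_le_mul_of_nonneg_right h2 hstep0.le
      _ = x + L := by field_simp
  have hmge : x + L ≤ ((m:ℝ) + 1) * hstep := by
    rcases le_total t (Q-1) with hc | hc
    · have hmt : m = t := by omega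
      have h3 : (x + L)/hstep < (t:ℝ) + 1 := by
        have h4 := Int.lt_floor_add_one ((x + L)/hstep)
        rw [← htcast] at h4
        exact_mod_cast h4
      rw [hmt]
      calc x + L = ((x + L)/hstep) * hstep := by field_simp
        _ ≤ ((t:ℝ) + 1) * hstep := mul_le_mul_of_nonneg_right h3.le hstep0.le
    · have hmt : m = Q - 1 := by omega
      have hcast : ((m:ℝ) + 1) = (Q:ℝ) := by
        rw [hmt]
        have : ((Q-1:ℕ):ℝ) = (Q:ℝ) - 1 := by
          push_cast [Nat.cast_sub (by omega : 1 ≤ Q)]; ring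
        rw [this]; ring
      rw [hcast, hhstep]
      have : (Q:ℝ) * (2*L/Q) = 2*L := by field_simp
      rw [this]
      linarith
  -- factor bounds
  set c : ℕ → ℕ := fun k => if k ≤ m then m+1-k else k - m with hc
  have hc1 : ∀ k, 1 ≤ c k := by
    intro k; rw [hc]; dsimp only; split <;> omega
  have hck : ∀ k, k ≤ Q → |x - v k| ≤ (c k : ℝ) * hstep := by
    intro k hk
    have hvk : v k = -L + k * hstep := by simp only [hv]
    rw [abs_le]
    by_cases hkm : k ≤ m
    · have hcast : ((c k):ℝ) = (m:ℝ) + 1 - k := by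
        rw [hc]; dsimp only; rw [if_pos hkm]
        push_cast [Nat.cast_sub (by omega : k ≤ m+1)]; ring
      have hkm' : (k:ℝ) ≤ m := by exact_mod_cast hkm
      have h1 : (k:ℝ) * hstep ≤ (m:ℝ) * hstep := mul_le_mul_of_nonneg_right hkm' hstep0.le
      constructor
      · have hpos : (0:ℝ) ≤ ((c k):ℝ) * hstep := by positivity
        have : 0 ≤ x - v k := by rw [hvk]; linarith
        linarith
      · rw [hvk, hcast]; nlinarith [hmge]
    · have hkm1 : m + 1 ≤ k := by omega
      have hcast : ((c k):ℝ) = (k:ℝ) - m := by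
        rw [hc]; dsimp only; rw [if_neg hkm]
        push_cast [Nat.cast_sub (by omega : m ≤ k)]; ring
      have hkm' : (m:ℝ) + 1 ≤ k := by exact_mod_cast hkm1
      have h1 : ((m:ℝ)+1) * hstep ≤ (k:ℝ) * hstep := mul_le_mul_of_nonneg_right hkm' hstep0.le
      constructor
      · rw [hvk, hcast]; nlinarith [hmle]
      · have hpos : (0:ℝ) ≤ ((c k):ℝ) * hstep := by positivity
        have : x - v k ≤ 0 := by rw [hvk]; linarith
        linarith
  -- product of c over the full range
  have hprodc : ∏ k ∈ sQ, c k = (m+1).factorial * (Q - m).factorial := by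
    rw [hsQ, Finset.range_eq_Ico,
      ← Finset.prod_Ico_consecutive _ (by omega : 0 ≤ m+1) (by omega : m+1 ≤ Q+1)]
    congr 1
    · rw [← Finset.range_eq_Ico, ← ArcsinAux.nat_prod1 (m+1)]
      apply Finset.prod_congr rfl
      intro k hk
      rw [Finset.mem_range] at hk
      rw [hc]; dsimp only; rw [if_pos (by omega)]
    · rw [← ArcsinAux.nat_prod2 (m+1) (Q-m)]
      apply Finset.prod_congr (by congr 1; omega)
      intro k hk
      rw [Finset.mem_Ico] at hk
      rw [hc]; dsimp only; rw [if_neg (by omega)]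
      omega
  have hprodc_le : ∀ i ∈ sQ, (∏ k ∈ sQ.erase i, c k) ≤ Q.factorial := by
    intro i hi
    have h1 : c i * ∏ k ∈ sQ.erase i, c k = ∏ k ∈ sQ, c k := Finset.mul_prod_erase sQ c hi
    have h2 := ArcsinAux.fact_mul_fact_le (show m+1 ≤ Q from hmQ)
    have h3 : ∏ k ∈ sQ.erase i, c k ≤ ∏ k ∈ sQ, c k := by
      calc ∏ k ∈ sQ.erase i, c k ≤ c i * ∏ k ∈ sQ.erase i, c k :=
            Nat.le_mul_of_pos_left _ (hc1 i)
        _ = ∏ k ∈ sQ, c k := h1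
    calc ∏ k ∈ sQ.erase i, c k ≤ ∏ k ∈ sQ, c k := h3
      _ = (m+1).factorial * (Q - m).factorial := hprodc
      _ ≤ Q.factorial := h2
  have hcarderase : ∀ i ∈ sQ, (sQ.erase i).card = Q := by
    intro i hi
    rw [Finset.card_erase_of_mem hi, hsQ, Finset.card_range]
    omega
  have hnum : ∀ i ∈ sQ, ∏ j ∈ sQ.erase i, |x - v j| ≤ (Q.factorial : ℝ) * hstep^Q := by
    intro i hi
    calc ∏ j ∈ sQ.erase i, |x - v j| ≤ ∏ j ∈ sQ.erase i, ((c j : ℝ) * hstep) := by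
          apply Finset.prod_le_prod (fun j _ => abs_nonneg _)
          intro j hj
          have hjQ : j ≤ Q := by
            have := Finset.mem_of_mem_erase hj
            rw [hsQ, Finset.mem_range] at this
            omega
          exact hck j hjQ
      _ = (∏ j ∈ sQ.erase i, ((c j):ℝ)) * hstep^Q := by
          rw [Finset.prod_mul_distrib, Finset.prod_const, hcarderase i hi]
      _ ≤ (Q.factorial : ℝ) * hstep^Q := by
          apply mul_le_mul_of_nonneg_right _ (by positivity)
          rw [← Nat.cast_prod]
          exact_mod_cast hprodc_le i hi
  have hden : ∀ i ∈ sQ, ∏ j ∈ sQ.erase i, |v i - v j|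
      = ((i.factorial * (Q - i).factorial : ℕ) : ℝ) * hstep^Q := by
    intro i hi
    have hiQ : i ≤ Q := by rw [hsQ, Finset.mem_range] at hi; omega
    have hvij : ∀ j : ℕ, v i - v j = ((i:ℝ) - j) * hstep := by
      intro j; simp only [hv]; ring
    calc ∏ j ∈ sQ.erase i, |v i - v j|
        = ∏ j ∈ sQ.erase i, (|(i:ℝ) - j| * hstep) := by
          apply Finset.prod_congr rfl
          intro j _
          rw [hvij, abs_mul, abs_of_pos hstep0]
      _ = (∏ j ∈ sQ.erase i, |(i:ℝ) - j|) * hstep^Q := by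
          rw [Finset.prod_mul_distrib, Finset.prod_const, hcarderase i hi]
      _ = ((i.factorial * (Q - i).factorial : ℕ) : ℝ) * hstep^Q := by
          congr 1
          have hterm : ∀ j ∈ sQ.erase i,
              |(i:ℝ) - (j:ℝ)| = (((if j ≤ i then i - j else j - i) : ℕ) : ℝ) := by
            intro j hj
            by_cases hji : j ≤ i
            · rw [if_pos hji]
              have : ((i - j : ℕ) : ℝ) = (i:ℝ) - j := by
                push_cast [Nat.cast_sub hji]; ring
              rw [this, abs_of_nonneg]
              have : (j:ℝ) ≤ i := by exact_mod_cast hji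
              linarith
            · rw [if_neg hji]
              have : ((j - i : ℕ) : ℝ) = (j:ℝ) - i := by
                push_cast [Nat.cast_sub (by omega : i ≤ j)]; ring
              rw [this, abs_of_nonpos]
              · ring
              · have : (i:ℝ) ≤ j := by exact_mod_cast (by omega : i ≤ j)
                linarith
          rw [Finset.prod_congr rfl hterm, ← Nat.cast_prod]
          congr 1
          have hsplit : sQ.erase i = Finset.Ico 0 i ∪ Finset.Ico (i+1) (Q+1) := by
            ext k
            simp only [hsQ, Finset.mem_erase, Finset.mem_range, Finset.mem_Ico,
              Finset.mem_union]
            omega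
          have hdisj : Disjoint (Finset.Ico 0 i) (Finset.Ico (i+1) (Q+1)) := by
            rw [Finset.disjoint_left]
            intro a ha hb
            rw [Finset.mem_Ico] at ha hb
            omega
          rw [hsplit, Finset.prod_union hdisj]
          have hp1 : ∏ j ∈ Finset.Ico 0 i, (if j ≤ i then i - j else j - i) = i.factorial := by
            rw [← Finset.range_eq_Ico, ← ArcsinAux.nat_prod1 i]
            apply Finset.prod_congr rfl
            intro j hj
            rw [Finset.mem_range] at hj
            rw [if_pos (by omega)]
          have hp2 : ∏ j ∈ Finset.Ico (i+1) (Q+1), (if j ≤ i then i - j else j - i)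
              = (Q - i).factorial := by
            rw [← ArcsinAux.nat_prod2 (i+1) (Q-i)]
            apply Finset.prod_congr (by congr 1; omega)
            intro j hj
            rw [Finset.mem_Ico] at hj
            rw [if_neg (by omega)]
            omega
          rw [hp1, hp2]
  have hbasis : ∀ i ∈ sQ,
      |∏ j ∈ sQ.erase i, ((v i - v j)⁻¹ * (x - v j))| ≤ (Q.choose i : ℝ) := by
    intro i hi
    have hiQ : i ≤ Q := by rw [hsQ, Finset.mem_range] at hi; omega
    rw [Finset.abs_prod]
    have hsplit2 : ∀ j ∈ sQ.erase i,
        |(v i - v j)⁻¹ * (x - v j)| = |v i - v j|⁻¹ * |x - v j| := by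
      intro j _
      rw [abs_mul, abs_inv]
    rw [Finset.prod_congr rfl hsplit2, Finset.prod_mul_distrib, Finset.prod_inv_distrib,
      hden i hi]
    have hd0 : (0:ℝ) < ((i.factorial * (Q - i).factorial : ℕ) : ℝ) * hstep^Q := by positivity
    rw [inv_mul_le_iff₀ hd0]
    calc ∏ j ∈ sQ.erase i, |x - v j| ≤ (Q.factorial : ℝ) * hstep^Q := hnum i hi
      _ = ((i.factorial * (Q - i).factorial : ℕ) : ℝ) * hstep^Q * (Q.choose i : ℝ) := by
          have hch : Q.choose i * (i.factorial * (Q - i).factorial) = Q.factorial := by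
            rw [← Nat.choose_mul_factorial_mul_factorial hiQ]; ring
          push_cast [← hch]
          ring
  -- the whole sum
  have hsum : |(P - Tp).eval x| ≤ ε0 * L * 2^Q := by
    rw [hevalPT]
    have hvmem : ∀ i ∈ sQ, v i ∈ Set.Icc (-L) L := by
      intro i hi
      have hiQ : i ≤ Q := by rw [hsQ, Finset.mem_range] at hi; omega
      have hiQ' : (i:ℝ) ≤ Q := by exact_mod_cast hiQ
      have h1 : (0:ℝ) ≤ (i:ℝ) * hstep := by positivity
      have h2 : (i:ℝ) * hstep ≤ (Q:ℝ) * hstep := mul_le_mul_of_nonneg_right hiQ' hstep0.le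
      have h3 : (Q:ℝ) * hstep = 2*L := by rw [hhstep]; field_simp
      constructor
      · simp only [hv]; linarith
      · simp only [hv]; linarith
    calc |∑ i ∈ sQ, g (v i) * ∏ j ∈ sQ.erase i, ((v i - v j)⁻¹ * (x - v j))|
        ≤ ∑ i ∈ sQ, |g (v i) * ∏ j ∈ sQ.erase i, ((v i - v j)⁻¹ * (x - v j))| :=
          Finset.abs_sum_le_sum_abs _ _
      _ ≤ ∑ i ∈ sQ, (ε0 * L) * (Q.choose i : ℝ) := by
          apply Finset.sum_le_sum
          intro i hi
          rw [abs_mul]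
          exact mul_le_mul (hgle (v i) (hvmem i hi)) (hbasis i hi) (abs_nonneg _)
            (by positivity)
      _ = (ε0 * L) * ∑ i ∈ sQ, (Q.choose i : ℝ) := by rw [Finset.mul_sum]
      _ = ε0 * L * 2^Q := by
          congr 1
          rw [← Nat.cast_sum, hsQ, Nat.sum_range_choose]
          push_cast
          ring
  -- final assembly
  have habs : |P.eval x - Real.arcsin x| ≤ ε0 * L * 2^Q + ε0 * L := by
    have hsplit3 : P.eval x - Real.arcsin x = (P - Tp).eval x - g x := by
      simp only [hg, Polynomial.eval_sub]
      ring
    rw [hsplit3]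
    calc |(P - Tp).eval x - g x| ≤ |(P - Tp).eval x| + |g x| := abs_sub _ _
      _ ≤ ε0 * L * 2^Q + ε0 * L := add_le_add hsum (hgle x hx)
  have h2N : L^(2*N+2) * L ≤ L^(Q+1) := by
    rw [← pow_succ]
    exact pow_le_pow_of_le_one hL0.le hL1.le (by omega : Q+1 ≤ 2*N+3)
  have hkey : 1 - Real.exp 1 * L ≤ 2 * Real.exp 1 * (1 - L^2) := by nlinarith
  calc |P.eval x - Real.arcsin x| ≤ ε0 * L * 2^Q + ε0 * L := habs
    _ = ε0 * L * (2^Q + 1) := by ring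
    _ ≤ ε0 * L * 2^(Q+1) := by
        apply mul_le_mul_of_nonneg_left _ (by positivity)
        have h1 : (1:ℝ) ≤ 2^Q := by
          calc (1:ℝ) = 1^Q := (one_pow Q).symm
            _ ≤ 2^Q := pow_le_pow_left₀ (by norm_num) (by norm_num) Q
        rw [pow_succ]
        linarith
    _ = (L^(2*N+2) * L) * 2^(Q+1) / (1 - L^2) := by rw [hε0]; ring
    _ ≤ L^(Q+1) * 2^(Q+1) / (1 - L^2) := by
        apply (div_le_div_iff_of_pos_right hL2).mpr
        exact mul_le_mul_of_nonneg_right h2N (by positivity)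
    _ = (2*L)^(Q+1) / (1 - L^2) := by rw [mul_pow]; ring
    _ ≤ 2 * Real.exp 1 * (2 * L) ^ (Q + 1) / (1 - Real.exp 1 * L) := by
        rw [div_le_div_iff₀ hL2 heL0]
        have hpow : (0:ℝ) ≤ (2*L)^(Q+1) := by positivity
        nlinarith [mul_le_mul_of_nonneg_left hkey hpow]
end

section
/- There is a universal constant α > 0 such that for every ε ∈ (0, 1 − arcsin(1/3)) there exists a real polynomial P of degree at most α·log₂(1/ε) satisfying |P(x) − arcsin(x)| ≤ ε for all x ∈ [−1/π, 1/π]. -/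
open Polynomial

noncomputable def carcsin (z : ℂ) : ℂ :=
  -Complex.I * Complex.log (Complex.I * z + (1 - z ^ 2) ^ (1 / 2 : ℂ))

lemma carcsin_diff {z : ℂ} (hz : ‖z‖ < 0.55) : DifferentiableAt ℂ carcsin z := by
  set w : ℂ := 1 - z ^ 2 with hw
  have habs : ‖z‖ < 0.55 := hz
  have hre_sq : (z ^ 2).re ≤ ‖z‖ ^ 2 := by
    calc (z ^ 2).re ≤ ‖z ^ 2‖ := Complex.re_le_norm _
    _ = ‖z‖ ^ 2 := by rw [norm_pow]
  have hwre : (0.69 : ℝ) < w.re := by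
    have : ‖z‖ ^ 2 < 0.31 := by nlinarith [norm_nonneg z]
    have : (z ^ 2).re < 0.31 := lt_of_le_of_lt hre_sq this
    simp only [hw, Complex.sub_re, Complex.one_re]
    linarith
  have hwre0 : (0 : ℝ) < w.re := by linarith
  have hw_slit : w ∈ Complex.slitPlane := Or.inl hwre0
  have hwne : w ≠ 0 := Complex.slitPlane_ne_zero hw_slit
  -- real part of the square root
  set s : ℂ := w ^ (1 / 2 : ℂ) with hs
  have hsval : s = Complex.exp (Complex.log w * (1 / 2)) := by
    rw [hs, Complex.cpow_def_of_ne_zero hwne]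
  have hsre : s.re = Real.sqrt ‖w‖ * Real.cos (Complex.arg w / 2) := by
    rw [hsval, Complex.exp_re]
    have h1 : (Complex.log w * (1 / 2)).re = Real.log ‖w‖ / 2 := by
      simp [Complex.mul_re, Complex.log_re]
      ring
    have h2 : (Complex.log w * (1 / 2)).im = Complex.arg w / 2 := by
      simp [Complex.mul_im, Complex.log_im]
      ring
    rw [h1, h2]
    congr 1
    rw [← Real.log_sqrt (norm_nonneg w), Real.exp_log]
    exact Real.sqrt_pos.mpr (lt_of_lt_of_le hwre0 (Complex.re_le_norm w))
  have habsw : (0.69 : ℝ) ≤ ‖w‖ := le_trans (le_of_lt hwre) (Complex.re_le_norm w)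
  have hargw : |Complex.arg w| < Real.pi / 2 :=
    Complex.abs_arg_lt_pi_div_two_iff.mpr (Or.inl hwre0)
  have hsqrt : (0.83 : ℝ) ≤ Real.sqrt ‖w‖ := by
    rw [show (0.83 : ℝ) = Real.sqrt (0.83 ^ 2) by rw [Real.sqrt_sq]; norm_num]
    exact Real.sqrt_le_sqrt (by nlinarith)
  have hcos : (0.7 : ℝ) ≤ Real.cos (Complex.arg w / 2) := by
    have h4 : |Complex.arg w / 2| ≤ Real.pi / 4 := by
      rw [abs_div]
      have : |(2:ℝ)| = 2 := by norm_num
      rw [this]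
      linarith
    have := Real.cos_abs (Complex.arg w / 2)
    have hc : Real.cos (Real.pi / 4) ≤ Real.cos |Complex.arg w / 2| := by
      apply Real.cos_le_cos_of_nonneg_of_le_pi (abs_nonneg _) _ h4
      linarith [Real.pi_pos]
    rw [Real.cos_pi_div_four] at hc
    have h2 : (0.7 : ℝ) ≤ Real.sqrt 2 / 2 := by
      rw [le_div_iff₀ (by norm_num : (0:ℝ) < 2)] at *
      nlinarith [Real.sq_sqrt (by norm_num : (0:ℝ) ≤ 2), Real.sqrt_nonneg 2]
    rw [Real.cos_abs] at hc
    linarith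
  have hsre' : (0.58 : ℝ) ≤ s.re := by
    rw [hsre]; nlinarith [Real.sqrt_nonneg ‖w‖]
  have him : |z.im| < 0.55 := lt_of_le_of_lt (Complex.abs_im_le_norm z) habs
  have hu : (Complex.I * z + s) ∈ Complex.slitPlane := by
    left
    simp only [Complex.add_re, Complex.mul_re, Complex.I_re, Complex.I_im]
    have : |z.im| < 0.55 := him
    rw [abs_lt] at this
    simp only [zero_mul, one_mul, zero_sub]
    linarith
  -- differentiability
  have hg : DifferentiableAt ℂ (fun z : ℂ => Complex.I * z + (1 - z ^ 2) ^ (1 / 2 : ℂ)) z := by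
    apply DifferentiableAt.add
    · exact (differentiableAt_id.const_mul _)
    · have hd : HasDerivAt (fun z : ℂ => 1 - z ^ 2) (-(2 * z)) z := by
        simpa using ((hasDerivAt_pow 2 z).const_sub 1)
      exact (hd.cpow_const hw_slit).differentiableAt
  exact ((hg.clog hu).const_mul _ : DifferentiableAt ℂ carcsin z)

lemma carcsin_real {x : ℝ} (hx : |x| ≤ 1 / 3) : carcsin (x : ℂ) = (Real.arcsin x : ℂ) := by
  have hx1 : -1 ≤ x := by rw [abs_le] at hx; linarith
  have hx2 : x ≤ 1 := by rw [abs_le] at hx; linarith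
  have hxx : (0:ℝ) ≤ 1 - x ^ 2 := by nlinarith
  have h1 : (1 - (x:ℂ) ^ 2) = ((1 - x ^ 2 : ℝ) : ℂ) := by push_cast; ring
  have h2 : (1 - (x:ℂ) ^ 2) ^ (1 / 2 : ℂ) = ((Real.sqrt (1 - x ^ 2) : ℝ) : ℂ) := by
    rw [Real.sqrt_eq_rpow, h1, show ((1:ℂ)/2) = ((1/2 : ℝ) : ℂ) by norm_num]
    exact (Complex.ofReal_cpow hxx _).symm
  set θ := Real.arcsin x with hθ
  have hθs : Real.sin θ = x := Real.sin_arcsin hx1 hx2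
  have hθc : Real.cos θ = Real.sqrt (1 - x ^ 2) := by
    rw [hθ, Real.cos_arcsin]
  have key : Complex.I * (x:ℂ) + ((Real.sqrt (1 - x ^ 2) : ℝ) : ℂ)
      = Complex.exp ((θ:ℂ) * Complex.I) := by
    rw [Complex.exp_mul_I, ← Complex.ofReal_cos, ← Complex.ofReal_sin, hθs, hθc]
    ring
  have him : ((θ:ℂ) * Complex.I).im = θ := by simp
  unfold carcsin
  rw [h2, key, Complex.log_exp]
  · rw [show -Complex.I * ((θ:ℂ) * Complex.I) = -(Complex.I * Complex.I) * θ by ring,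
      Complex.I_mul_I]
    ring
  · rw [him]
    have := Real.neg_pi_div_two_le_arcsin x
    linarith [Real.pi_pos]
  · rw [him]
    have := Real.arcsin_le_pi_div_two x
    linarith [Real.pi_pos]


open scoped NNReal in
/-- There is a universal `α > 0` such that for every `ε ∈ (0, 1 − arcsin(1/3))` there is a
real polynomial of degree at most `α·log₂(1/ε)` approximating arcsin to within `ε` on
`[−1/π, 1/π]`. -/
theorem arcsin_poly_approx_small_interval :
    ∃ α : ℝ, 0 < α ∧
      ∀ ε : ℝ, ε ∈ Set.Ioo (0 : ℝ) (1 - Real.arcsin (1 / 3)) →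
        ∃ P : Polynomial ℝ,
          (P.natDegree : ℝ) ≤ α * Real.logb 2 (1 / ε) ∧
          ∀ x : ℝ, x ∈ Set.Icc (-(1 / Real.pi)) (1 / Real.pi) →
            |P.eval x - Real.arcsin x| ≤ ε := by
  -- the power series of the analytic extension of arcsin on the closed disc of radius 1/2
  have hdiff : DifferentiableOn ℂ carcsin (Metric.closedBall 0 ((1/2 : ℝ≥0) : ℝ)) := by
    intro z hz
    refine (carcsin_diff ?_).differentiableWithinAt
    rw [Metric.mem_closedBall, dist_zero_right] at hz
    calc ‖z‖ ≤ ((1/2 : ℝ≥0) : ℝ) := hz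
    _ < 0.55 := by norm_num
  have hps := hdiff.hasFPowerSeriesOnBall (by norm_num : (0:ℝ≥0) < 1/2)
  set p := cauchyPowerSeries carcsin 0 ((1/2 : ℝ≥0) : ℝ) with hpdef
  obtain ⟨a, ha, M, hM, hbound⟩ := hps.uniform_geometric_approx
    (r' := (7/20 : ℝ≥0)) (by rw [ENNReal.coe_lt_coe, ← NNReal.coe_lt_coe]; push_cast; norm_num)
  -- constants
  have haL : Real.log a < 0 := Real.log_neg ha.1 ha.2
  set L : ℝ := -Real.log a with hLdef
  have hL : 0 < L := by simp [hLdef]; linarith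
  set B : ℝ := 1 - Real.arcsin (1/3) with hBdef
  have harc_pos : 0 < Real.arcsin (1/3) := Real.arcsin_pos.mpr (by norm_num)
  have harc_lt : Real.arcsin (1/3) < 1 := by
    have h1 : Real.arcsin (1/3) ≤ Real.arcsin (1/2) :=
      Real.monotone_arcsin (by norm_num)
    have h2 : Real.arcsin (1/2) = Real.pi / 6 := by
      rw [show (1/2 : ℝ) = Real.sin (Real.pi/6) by rw [Real.sin_pi_div_six]]
      refine Real.arcsin_sin ?_ ?_ <;> linarith [Real.pi_pos]
    have := Real.pi_lt_d2
    linarith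
  have hB0 : 0 < B := by rw [hBdef]; linarith
  have hB1 : B < 1 := by rw [hBdef]; linarith
  set c0 : ℝ := -Real.log B with hc0def
  have hc0 : 0 < c0 := by
    have := Real.log_neg hB0 hB1
    simp [hc0def]; linarith
  set Q : ℝ := |Real.log M| with hQdef
  have hQ0 : 0 ≤ Q := abs_nonneg _
  refine ⟨Real.log 2 * (1 / L + (Q / L + 1) / c0), by positivity, ?_⟩
  rintro ε ⟨hε0, hεB⟩
  have hε1 : ε < 1 := lt_trans hεB hB1
  have hlogε : c0 < Real.log (1/ε) := by
    have := Real.log_lt_log hε0 hεB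
    rw [Real.log_div one_ne_zero hε0.ne', Real.log_one]
    simp only [hc0def]
    linarith
  have hlogεpos : 0 < Real.log (1/ε) := lt_trans hc0 hlogε
  -- choice of the degree
  set t : ℝ := Real.log (ε / M) / Real.log a with htdef
  set n : ℕ := ⌈t⌉₊ with hndef
  -- the geometric error bound
  have hgeom : M * a ^ n ≤ ε := by
    have h1 : t ≤ (n : ℝ) := Nat.le_ceil _
    have h2 : (n : ℝ) * Real.log a ≤ Real.log (ε / M) := by
      rw [htdef] at h1
      exact (div_le_iff_of_neg haL).mp h1
    have h3 : a ^ n = Real.exp ((n : ℝ) * Real.log a) := by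
      rw [Real.exp_nat_mul, Real.exp_log ha.1]
    have h4 : a ^ n ≤ ε / M := by
      rw [h3, ← Real.exp_log (div_pos hε0 hM)]
      exact Real.exp_le_exp.mpr h2
    calc M * a ^ n ≤ M * (ε / M) := by
          exact mul_le_mul_of_nonneg_left h4 hM.le
    _ = ε := by field_simp
  -- the degree bound
  have hdegbound : (n : ℝ) ≤ Real.log 2 * (1 / L + (Q / L + 1) / c0) * Real.logb 2 (1/ε) := by
    have e1 : Real.log 2 * (1 / L + (Q / L + 1) / c0) * Real.logb 2 (1/ε)
        = (1 / L + (Q / L + 1) / c0) * Real.log (1/ε) := by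
      rw [Real.logb]
      have : Real.log 2 ≠ 0 := by positivity
      field_simp
    rw [e1]
    have s3 : Q / L + 1 ≤ (Q / L + 1) * (Real.log (1/ε) / c0) := by
      nth_rewrite 1 [← mul_one (Q / L + 1)]
      refine mul_le_mul_of_nonneg_left ?_ (by positivity)
      rw [le_div_iff₀ hc0]
      linarith
    have s4 : (1 / L + (Q / L + 1) / c0) * Real.log (1/ε)
        = Real.log (1/ε) / L + (Q / L + 1) * (Real.log (1/ε) / c0) := by ring
    rw [s4]
    by_cases ht : 0 ≤ t
    · have s1 : (n : ℝ) < t + 1 := Nat.ceil_lt_add_one ht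
      have s2 : t ≤ (Q + Real.log (1/ε)) / L := by
        have hlm : Real.log (ε / M) = Real.log ε - Real.log M :=
          Real.log_div hε0.ne' hM.ne'
        have hli : Real.log (1/ε) = -Real.log ε := by
          rw [Real.log_div one_ne_zero hε0.ne', Real.log_one]; ring
        have he : t = (Real.log M - Real.log ε) / L := by
          rw [htdef, hlm, hLdef, div_neg, ← neg_div, neg_sub]
        rw [he, hli]
        gcongr
        linarith [le_abs_self (Real.log M), hQdef.symm ▸ le_abs_self (Real.log M)]
      have s5 : (Q + Real.log (1/ε)) / L = Q / L + Real.log (1/ε) / L := add_div _ _ _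
      linarith
    · have hn0 : n = 0 := by
        rw [hndef, Nat.ceil_eq_zero]
        linarith
      rw [hn0]
      push_cast
      have p1 : 0 ≤ Real.log (1/ε) / L := le_of_lt (div_pos hlogεpos hL)
      have p2 : 0 < Real.log (1/ε) / c0 := div_pos hlogεpos hc0
      have p3 : 0 ≤ Q / L := div_nonneg hQ0 hL.le
      nlinarith [p1, p2, p3]
  -- the polynomial
  refine ⟨∑ k ∈ Finset.range n, Polynomial.C ((p.coeff k).re) * Polynomial.X ^ k, ?_, ?_⟩
  · refine le_trans ?_ hdegbound
    have hdeg : (∑ k ∈ Finset.range n,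
        Polynomial.C ((p.coeff k).re) * Polynomial.X ^ k).natDegree ≤ n :=
      Polynomial.natDegree_sum_le_of_forall_le _ _ (fun k hk =>
        le_trans (Polynomial.natDegree_C_mul_X_pow_le _ _) (Finset.mem_range.mp hk).le)
    exact_mod_cast hdeg
  · intro x hx
    have hpi : (3:ℝ) < Real.pi := Real.pi_gt_three
    have hx3 : |x| ≤ 1/3 := by
      have h1 : |x| ≤ 1 / Real.pi := abs_le.mpr ⟨by linarith [hx.1], hx.2⟩
      have h2 : 1 / Real.pi ≤ 1/3 := by
        rw [div_le_div_iff₀ (by linarith) (by norm_num)]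
        linarith
      linarith
    have hmem : (x : ℂ) ∈ Metric.ball (0:ℂ) ((7/20 : ℝ≥0) : ℝ) := by
      rw [Metric.mem_ball, dist_zero_right, Complex.norm_real, Real.norm_eq_abs]
      calc |x| ≤ 1/3 := hx3
      _ < ((7/20 : ℝ≥0) : ℝ) := by push_cast; norm_num
    have hb := hbound _ hmem n
    rw [zero_add, carcsin_real hx3] at hb
    have heval : Polynomial.eval x
        (∑ k ∈ Finset.range n, Polynomial.C ((p.coeff k).re) * Polynomial.X ^ k)
        = (p.partialSum n (x:ℂ)).re := by
      rw [Polynomial.eval_finset_sum]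
      unfold FormalMultilinearSeries.partialSum
      rw [Complex.re_sum]
      refine Finset.sum_congr rfl (fun k _ => ?_)
      rw [FormalMultilinearSeries.apply_eq_pow_smul_coeff, smul_eq_mul]
      simp [Complex.mul_re, ← Complex.ofReal_pow]
      ring
    rw [heval]
    have h6 := Complex.abs_re_le_norm ((Real.arcsin x : ℂ) - p.partialSum n (x:ℂ))
    rw [Complex.sub_re, Complex.ofReal_re] at h6
    calc |(p.partialSum n (x:ℂ)).re - Real.arcsin x|
        = |Real.arcsin x - (p.partialSum n (x:ℂ)).re| := abs_sub_comm _ _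
    _ ≤ ‖(Real.arcsin x : ℂ) - p.partialSum n (x:ℂ)‖ := h6
    _ ≤ M * a ^ n := hb
    _ ≤ ε := hgeom
end
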